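/- arXiv:2501.10590 — 5 statements merged into one kernel-verified Lean document; each statement's English description precedes it below -/
import Mathlib

section
/- Let c ∈ C²([0,∞)) be positive with c(x) = c0 for all x ≥ 1, for some constant c0 > 0, and let u ∈ C²(ℝ×[0,∞)) satisfy ∂²_t u(t,x) = c(x)² ∂²_x u(t,x) for all (t,x) ∈ ℝ×(0,∞). If u(t,0) = 0 and ∂_x u(t,0) = 0 for all t ∈ ℝ, then u(t,x) = 0 for all (t,x) ∈ ℝ×[0,∞). -/
/-!
Treat `x` as the evolution variable. Along the characteristics `dt/dx = ∓ 1/c(x)` the Riemann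
invariants `u_t ± c u_x` change at rate `± c' u_x`, so on a strip `a ≤ x ≤ b` of a characteristic
triangle whose base line `x = a` carries zero Cauchy data, the maximum `M` of `|u_t| + |u_x|`
satisfies `M ≤ K (b - a) (1 + 1/m) M`, where `|c'| ≤ K` and `c ≥ m > 0`. For thin strips this
forces `M = 0`; marching in `x` from the zero data at `x = 0` gives `u_x = 0` everywhere, hence
`u = 0`.
-/

open Set Filter Topology Function

namespace LateralWave

abbrev halfPlane : Set (ℝ × ℝ) := univ ×ˢ Ici 0

noncomputable def partialT (u : ℝ → ℝ → ℝ) (q : ℝ × ℝ) : ℝ :=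
  fderivWithin ℝ (uncurry u) halfPlane q (1, 0)

noncomputable def partialX (u : ℝ → ℝ → ℝ) (q : ℝ × ℝ) : ℝ :=
  fderivWithin ℝ (uncurry u) halfPlane q (0, 1)

noncomputable def hessian (u : ℝ → ℝ → ℝ) (q : ℝ × ℝ) : ℝ × ℝ →L[ℝ] ℝ × ℝ →L[ℝ] ℝ :=
  fderiv ℝ (fderiv ℝ (uncurry u)) q

def SolvesWave (c : ℝ → ℝ) (u : ℝ → ℝ → ℝ) : Prop :=
  ∀ t : ℝ, ∀ x > (0:ℝ),
    deriv (fun s => deriv (fun r => u r x) s) t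
      = (c x)^2 * deriv (fun y => deriv (fun z => u t z) y) x

theorem uniqueDiffOn_halfPlane : UniqueDiffOn ℝ halfPlane :=
  uniqueDiffOn_univ.prod (uniqueDiffOn_Ici 0)

theorem mk_mem_halfPlane (t : ℝ) {x : ℝ} (hx : 0 ≤ x) : (t, x) ∈ halfPlane :=
  ⟨mem_univ t, hx⟩

theorem halfPlane_mem_nhds {q : ℝ × ℝ} (hq : 0 < q.2) : halfPlane ∈ 𝓝 q :=
  prod_mem_nhds univ_mem (Ici_mem_nhds hq)

theorem eventually_pos_snd {q : ℝ × ℝ} (hq : 0 < q.2) : ∀ᶠ q' in 𝓝 q, 0 < q'.2 :=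
  continuous_snd.continuousAt.eventually (lt_mem_nhds hq)

variable {u : ℝ → ℝ → ℝ} {c : ℝ → ℝ}

section FirstOrder

variable (hu : DifferentiableOn ℝ (uncurry u) halfPlane)
include hu

theorem hasDerivAt_partialT {t x : ℝ} (hx : 0 ≤ x) :
    HasDerivAt (fun s => u s x) (partialT u (t, x)) t := by
  have hline : HasDerivWithinAt (fun s => ((s, x) : ℝ × ℝ)) (1, 0) univ t := by
    simpa using ((hasDerivAt_id t).prodMk (hasDerivAt_const t x)).hasDerivWithinAt (s := univ)
  have := ((hu _ (mk_mem_halfPlane t hx)).hasFDerivWithinAt).comp_hasDerivWithinAt t hline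
    (fun s _ => mk_mem_halfPlane s hx)
  exact hasDerivWithinAt_univ.mp this

theorem hasDerivWithinAt_partialX {t x : ℝ} (hx : 0 ≤ x) :
    HasDerivWithinAt (u t) (partialX u (t, x)) (Ici 0) x := by
  have hline : HasDerivWithinAt (fun y => ((t, y) : ℝ × ℝ)) (0, 1) (Ici 0) x := by
    simpa using ((hasDerivAt_const x t).prodMk (hasDerivAt_id x)).hasDerivWithinAt
  exact ((hu _ (mk_mem_halfPlane t hx)).hasFDerivWithinAt).comp_hasDerivWithinAt x hline
    (fun _ hy => mk_mem_halfPlane t hy)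

end FirstOrder

theorem continuousOn_fderivWithin_apply (hu : ContDiffOn ℝ 1 (uncurry u) halfPlane) (v : ℝ × ℝ) :
    ContinuousOn (fun q => fderivWithin ℝ (uncurry u) halfPlane q v) halfPlane :=
  (ContinuousLinearMap.apply ℝ ℝ v).continuous.comp_continuousOn
    (hu.continuousOn_fderivWithin uniqueDiffOn_halfPlane le_rfl)

section SecondOrder

variable (hu : ContDiffOn ℝ 2 (uncurry u) halfPlane)
include hu

theorem hasFDerivAt_fderiv {q : ℝ × ℝ} (hq : 0 < q.2) :
    HasFDerivAt (fderiv ℝ (uncurry u)) (hessian u q) q :=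
  (((hu.contDiffAt (halfPlane_mem_nhds hq)).fderiv_right le_rfl).differentiableAt
    one_ne_zero).hasFDerivAt

theorem hessian_symm {q : ℝ × ℝ} (hq : 0 < q.2) (v w : ℝ × ℝ) :
    hessian u q v w = hessian u q w v := by
  refine second_derivative_symmetric_of_eventually (f := uncurry u) ?_
    (hasFDerivAt_fderiv hu hq) v w
  filter_upwards [eventually_pos_snd hq] with q' hq'
  exact ((hu.contDiffAt (halfPlane_mem_nhds hq')).differentiableAt two_ne_zero).hasFDerivAt

theorem hasDerivAt_fderivWithin_comp {γ : ℝ → ℝ × ℝ} {γ' : ℝ × ℝ} {r : ℝ}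
    (hγ : HasDerivAt γ γ' r) (hr : 0 < (γ r).2) (v : ℝ × ℝ) :
    HasDerivAt (fun s => fderivWithin ℝ (uncurry u) halfPlane (γ s) v)
      (hessian u (γ r) γ' v) r := by
  have hD : HasFDerivAt (fun q => fderivWithin ℝ (uncurry u) halfPlane q v)
      ((ContinuousLinearMap.apply ℝ ℝ v).comp (hessian u (γ r))) (γ r) := by
    refine ((ContinuousLinearMap.apply ℝ ℝ v).hasFDerivAt.comp _
      (hasFDerivAt_fderiv hu hr)).congr_of_eventuallyEq ?_
    filter_upwards [eventually_pos_snd hr] with q hq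
    simp [fderivWithin_of_mem_nhds (halfPlane_mem_nhds hq)]
  exact hD.comp_hasDerivAt r hγ

theorem hessian_wave (hwave : SolvesWave c u) {t x : ℝ} (hx : 0 < x) :
    hessian u (t, x) (1, 0) (1, 0) = c x ^ 2 * hessian u (t, x) (0, 1) (0, 1) := by
  have htt : deriv (fun s => deriv (fun r => u r x) s) t = hessian u (t, x) (1, 0) (1, 0) := by
    have hline : HasDerivAt (fun s => ((s, x) : ℝ × ℝ)) (1, 0) t := by
      simpa using (hasDerivAt_id t).prodMk (hasDerivAt_const t x)
    simp only [fun s =>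
      (hasDerivAt_partialT (hu.differentiableOn two_ne_zero) (t := s) hx.le).deriv]
    exact (hasDerivAt_fderivWithin_comp hu hline hx (1, 0)).deriv
  have hxx : deriv (fun y => deriv (u t) y) x = hessian u (t, x) (0, 1) (0, 1) := by
    have hline : HasDerivAt (fun y => ((t, y) : ℝ × ℝ)) (0, 1) x := by
      simpa using (hasDerivAt_const x t).prodMk (hasDerivAt_id x)
    have hslice : (fun y => deriv (u t) y) =ᶠ[𝓝 x] fun y => partialX u (t, y) := by
      filter_upwards [lt_mem_nhds hx] with y hy
      exact ((hasDerivWithinAt_partialX (hu.differentiableOn two_ne_zero) hy.le).hasDerivAt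
        (Ici_mem_nhds hy)).deriv
    rw [hslice.deriv_eq]
    exact (hasDerivAt_fderivWithin_comp hu hline hx (0, 1)).deriv
  rw [← htt, ← hxx]
  exact hwave t x hx

end SecondOrder

noncomputable def travelTime (c : ℝ → ℝ) (x : ℝ) : ℝ := ∫ s in (0:ℝ)..x, (c s)⁻¹

noncomputable def riemannInvariant (c : ℝ → ℝ) (u : ℝ → ℝ → ℝ) (ε : ℝ) (q : ℝ × ℝ) : ℝ :=
  partialT u q + ε * c q.2 * partialX u q

/-- For `A = travelTime c X` this is the characteristic triangle with apex `(t₀, X)` and base on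
`x = 0`, cut down to the strip `a ≤ x ≤ b`. -/
def dependenceDomain (c : ℝ → ℝ) (t₀ A a b : ℝ) : Set (ℝ × ℝ) :=
  {q | q.2 ∈ Icc a b ∧ |q.1 - t₀| ≤ A - travelTime c q.2}

section TravelTime

variable (hc : ContinuousOn c (Ici 0)) (hcpos : ∀ x ∈ Ici (0:ℝ), 0 < c x)
include hc hcpos

theorem continuousOn_inv_speed : ContinuousOn (fun s => (c s)⁻¹) (Ici 0) :=
  hc.inv₀ fun x hx => (hcpos x hx).ne'

theorem intervalIntegrable_inv_speed {a b : ℝ} (ha : 0 ≤ a) (hb : 0 ≤ b) :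
    IntervalIntegrable (fun s => (c s)⁻¹) MeasureTheory.volume a b :=
  ((continuousOn_inv_speed hc hcpos).mono fun _ hs => (le_min ha hb).trans hs.1).intervalIntegrable

theorem hasDerivAt_travelTime {x : ℝ} (hx : 0 < x) : HasDerivAt (travelTime c) (c x)⁻¹ x :=
  intervalIntegral.integral_hasDerivAt_right (intervalIntegrable_inv_speed hc hcpos le_rfl hx.le)
    (((continuousOn_inv_speed hc hcpos).mono Ioi_subset_Ici_self).stronglyMeasurableAtFilter
      isOpen_Ioi x hx)
    ((continuousOn_inv_speed hc hcpos).continuousAt (Ici_mem_nhds hx))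

theorem monotoneOn_travelTime : MonotoneOn (travelTime c) (Ici 0) := by
  intro a ha b _ hab
  refine intervalIntegral.integral_mono_interval le_rfl ha hab ?_ ?_
  · filter_upwards [MeasureTheory.ae_restrict_mem measurableSet_Ioc] with s hs
    exact (inv_pos.2 (hcpos s (le_of_lt hs.1))).le
  · exact intervalIntegrable_inv_speed hc hcpos le_rfl (ha.trans hab)

theorem travelTime_nonneg {x : ℝ} (hx : 0 ≤ x) : 0 ≤ travelTime c x := by
  simpa [travelTime] using monotoneOn_travelTime hc hcpos self_mem_Ici hx hx

theorem continuousOn_travelTime (b : ℝ) : ContinuousOn (travelTime c) (Icc 0 b) := by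
  rcases le_total 0 b with hb | hb
  · have hint : MeasureTheory.IntegrableOn (fun s => (c s)⁻¹) (uIcc 0 b) := by
      rw [uIcc_of_le hb]
      exact ((continuousOn_inv_speed hc hcpos).mono Icc_subset_Ici_self).integrableOn_Icc
    have := intervalIntegral.continuousOn_primitive_interval hint
    rwa [uIcc_of_le hb] at this
  · exact (subsingleton_Icc_of_ge hb).continuousOn _

theorem isCompact_dependenceDomain (t₀ A : ℝ) {a : ℝ} (ha : 0 ≤ a) (b : ℝ) :
    IsCompact (dependenceDomain c t₀ A a b) := by
  have hclosed : IsClosed ((univ ×ˢ Icc a b) ∩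
      (fun q : ℝ × ℝ => |q.1 - t₀| + travelTime c q.2) ⁻¹' Iic A) :=
    ContinuousOn.preimage_isClosed_of_isClosed
      (((continuous_fst.sub continuous_const).abs.continuousOn).add
        ((continuousOn_travelTime hc hcpos b).comp continuous_snd.continuousOn
          fun q hq => ⟨ha.trans hq.2.1, hq.2.2⟩))
      (isClosed_univ.prod isClosed_Icc) isClosed_Iic
  refine IsCompact.of_isClosed_subset (s := Icc (t₀ - A) (t₀ + A) ×ˢ Icc a b)
    (isCompact_Icc.prod isCompact_Icc) ?_ ?_
  · convert hclosed using 1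
    ext q
    simp only [dependenceDomain, mem_ofPred_eq, mem_inter_iff, mem_prod, mem_univ, true_and,
      mem_preimage, mem_Iic]
    constructor <;> rintro ⟨h1, h2⟩ <;> exact ⟨h1, by linarith⟩
  · rintro q ⟨hq, hqt⟩
    have := travelTime_nonneg hc hcpos (ha.trans hq.1)
    obtain ⟨h1, h2⟩ := abs_le.1 (hqt.trans (by linarith : A - travelTime c q.2 ≤ A))
    exact ⟨⟨by linarith, by linarith⟩, hq⟩

end TravelTime

/-- The second-order terms cancel by the wave equation and the symmetry of the Hessian. -/
theorem hasDerivAt_riemannInvariant_comp (hu : ContDiffOn ℝ 2 (uncurry u) halfPlane)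
    (hwave : SolvesWave c u) {ε : ℝ} (hε : |ε| = 1) {γ : ℝ → ℝ} {s : ℝ} (hs : 0 < s)
    (hcs : c s ≠ 0) (hc : DifferentiableAt ℝ c s) (hγ : HasDerivAt γ (-ε * (c s)⁻¹) s) :
    HasDerivAt (fun r => riemannInvariant c u ε (γ r, r))
      (ε * deriv c s * partialX u (γ s, s)) s := by
  have hcurve : HasDerivAt (fun r => (γ r, r)) (-ε * (c s)⁻¹, 1) s := hγ.prodMk (hasDerivAt_id s)
  have hT := hasDerivAt_fderivWithin_comp hu hcurve hs (1, 0)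
  have hX := hasDerivAt_fderivWithin_comp hu hcurve hs (0, 1)
  refine (hT.add ((hc.hasDerivAt.const_mul ε).mul hX)).congr_deriv ?_
  have hsplit : ∀ v, hessian u (γ s, s) (-ε * (c s)⁻¹, 1) v
      = -ε * (c s)⁻¹ * hessian u (γ s, s) (1, 0) v + hessian u (γ s, s) (0, 1) v := by
    intro v
    have : ((-ε * (c s)⁻¹, 1) : ℝ × ℝ) = (-ε * (c s)⁻¹) • ((1, 0) : ℝ × ℝ) + (0, 1) := by
      simp
    rw [this, map_add, map_smul]
    rfl
  have hwave' := hessian_wave hu hwave (t := γ s) hs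
  have hsymm := hessian_symm hu (q := (γ s, s)) hs (0, 1) (1, 0)
  have hε2 : ε ^ 2 = 1 := by rw [← sq_abs, hε, one_pow]
  rw [hsplit, hsplit, hwave', hsymm, partialX]
  field_simp
  linear_combination -hessian u (γ s, s) (1, 0) (0, 1) * hε2

theorem abs_add_abs_le_of_forall_abs_add_mul_le {p r c m E : ℝ} (hm : 0 < m) (hmc : m ≤ c)
    (h : ∀ ε : ℝ, |ε| = 1 → |p + ε * c * r| ≤ E) : |p| + |r| ≤ E * (1 + m⁻¹) := by
  have hplus := abs_le.1 (h 1 abs_one)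
  have hminus := abs_le.1 (h (-1) (by simp))
  have hp : |p| ≤ E := abs_le.2 ⟨by linarith, by linarith⟩
  have hcr : c * |r| ≤ E := by
    rw [← abs_of_pos (hm.trans_le hmc), ← abs_mul]
    exact abs_le.2 ⟨by linarith, by linarith⟩
  have hr : |r| ≤ E * m⁻¹ := by
    rw [← div_eq_mul_inv, le_div_iff₀ hm]
    nlinarith [abs_nonneg r]
  linarith

section Strip

variable (hu : ContDiffOn ℝ 2 (uncurry u) halfPlane) (hc : DifferentiableOn ℝ c (Ici 0))
  (hcpos : ∀ x ∈ Ici (0:ℝ), 0 < c x) (hwave : SolvesWave c u)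
  {t₀ A a b : ℝ} (ha : 0 ≤ a)
  (hbase : ∀ t, |t - t₀| ≤ A - travelTime c a → partialT u (t, a) = 0 ∧ partialX u (t, a) = 0)
include hu hc hcpos hwave ha hbase

/-- Mean value theorem along the characteristic through `(t₁, x₁)`, which stays in the domain and
reaches the base line `x = a`, where the invariant vanishes. -/
theorem abs_riemannInvariant_le {K M ε t₁ x₁ : ℝ} (hε : |ε| = 1)
    (hK : ∀ s ∈ Ioo a b, |deriv c s| ≤ K)
    (hM : ∀ q ∈ dependenceDomain c t₀ A a b, |partialX u q| ≤ M)
    (hq₁ : (t₁, x₁) ∈ dependenceDomain c t₀ A a b) (hx₁ : a < x₁) :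
    |riemannInvariant c u ε (t₁, x₁)| ≤ K * M * (b - a) := by
  have hx₁b : x₁ ≤ b := hq₁.1.2
  set γ : ℝ → ℝ := fun s => t₁ + ε * (travelTime c x₁ - travelTime c s)
  set V : ℝ → ℝ := fun s => riemannInvariant c u ε (γ s, s)
  have hγ_mem : ∀ s ∈ Icc a x₁, (γ s, s) ∈ dependenceDomain c t₀ A a b := by
    intro s hs
    have hφ := monotoneOn_travelTime hc.continuousOn hcpos (ha.trans hs.1)
      (ha.trans hx₁.le) hs.2
    refine ⟨⟨hs.1, hs.2.trans hx₁b⟩, ?_⟩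
    calc |γ s - t₀| = |(t₁ - t₀) + ε * (travelTime c x₁ - travelTime c s)| := by
          simp only [γ]; ring_nf
      _ ≤ |t₁ - t₀| + |ε| * |travelTime c x₁ - travelTime c s| := by
          rw [← abs_mul]; exact abs_add_le _ _
      _ ≤ A - travelTime c s := by
          rw [hε, one_mul, abs_of_nonneg (sub_nonneg.2 hφ)]; linarith [hq₁.2]
  have hV_cont : ContinuousOn V (Icc a x₁) := by
    have hγ_cont : ContinuousOn (fun s => (γ s, s)) (Icc a x₁) :=
      (continuousOn_const.add (continuousOn_const.mul (continuousOn_const.sub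
        ((continuousOn_travelTime hc.continuousOn hcpos x₁).mono
          (Icc_subset_Icc_left ha))))).prodMk continuousOn_id
    have hγ_maps : MapsTo (fun s => (γ s, s)) (Icc a x₁) halfPlane :=
      fun s hs => mk_mem_halfPlane _ (ha.trans hs.1)
    exact ((continuousOn_fderivWithin_apply (hu.of_le one_le_two) (1, 0)).comp hγ_cont hγ_maps).add
      ((continuousOn_const.mul (hc.continuousOn.mono fun s hs => ha.trans hs.1)).mul
        ((continuousOn_fderivWithin_apply (hu.of_le one_le_two) (0, 1)).comp hγ_cont hγ_maps))
  have hV_deriv : ∀ s ∈ Ioo a x₁, HasDerivAt V (ε * deriv c s * partialX u (γ s, s)) s := by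
    intro s hs
    have hs₀ : 0 < s := ha.trans_lt hs.1
    have hγ : HasDerivAt γ (-ε * (c s)⁻¹) s := by
      simpa [γ] using ((hasDerivAt_travelTime hc.continuousOn hcpos hs₀).const_sub
        (travelTime c x₁)).const_mul ε |>.const_add t₁
    exact hasDerivAt_riemannInvariant_comp hu hwave hε hs₀ (hcpos s hs₀.le).ne'
      ((hc s hs₀.le).differentiableAt (Ici_mem_nhds hs₀)) hγ
  obtain ⟨ξ, hξ, hslope⟩ := exists_hasDerivAt_eq_slope V _ hx₁ hV_cont hV_deriv
  have hV_a : V a = 0 := by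
    obtain ⟨hT, hX⟩ := hbase (γ a) (hγ_mem a ⟨le_rfl, hx₁.le⟩).2
    simp [V, riemannInvariant, hT, hX]
  have hV_x₁ : V x₁ = riemannInvariant c u ε (t₁, x₁) := by simp [V, γ]
  have hξK := hK ξ ⟨hξ.1, hξ.2.trans_le hx₁b⟩
  have hξM := hM _ (hγ_mem ξ ⟨hξ.1.le, hξ.2.le⟩)
  have hKM : |V x₁| ≤ K * M * (x₁ - a) := by
    have hbound : |(V x₁ - V a) / (x₁ - a)| ≤ K * M := by
      rw [← hslope, abs_mul, abs_mul, hε, one_mul]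
      exact mul_le_mul hξK hξM (abs_nonneg _) ((abs_nonneg _).trans hξK)
    rwa [hV_a, sub_zero, abs_div, abs_of_pos (sub_pos.2 hx₁), div_le_iff₀ (sub_pos.2 hx₁)]
      at hbound
  have hKM₀ : 0 ≤ K * M := mul_nonneg ((abs_nonneg _).trans hξK) ((abs_nonneg _).trans hξM)
  rw [← hV_x₁]
  exact hKM.trans (mul_le_mul_of_nonneg_left (by linarith) hKM₀)

theorem partials_eq_zero_of_thin {m K : ℝ} (hm : 0 < m) (hmc : ∀ s ∈ Icc a b, m ≤ c s)
    (hK : ∀ s ∈ Ioo a b, |deriv c s| ≤ K) (hthin : K * (b - a) * (1 + m⁻¹) < 1) :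
    ∀ q ∈ dependenceDomain c t₀ A a b, partialT u q = 0 ∧ partialX u q = 0 := by
  intro q hq
  set g : ℝ × ℝ → ℝ := fun q => |partialT u q| + |partialX u q|
  have hD : dependenceDomain c t₀ A a b ⊆ halfPlane :=
    fun q hq => mk_mem_halfPlane q.1 (ha.trans hq.1.1)
  have hg_cont : ContinuousOn g (dependenceDomain c t₀ A a b) :=
    (((continuousOn_fderivWithin_apply (hu.of_le one_le_two) (1, 0)).abs.add
      (continuousOn_fderivWithin_apply (hu.of_le one_le_two) (0, 1)).abs)).mono hD
  obtain ⟨⟨t₁, x₁⟩, hq₁, hmax⟩ := (isCompact_dependenceDomain hc.continuousOn hcpos t₀ A ha b)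
    |>.exists_isMaxOn ⟨q, hq⟩ hg_cont
  set M := g (t₁, x₁)
  have hM : ∀ q ∈ dependenceDomain c t₀ A a b, |partialX u q| ≤ M :=
    fun q hq => (le_add_of_nonneg_left (abs_nonneg _)).trans (hmax hq)
  have hM₀ : 0 ≤ M := by positivity
  suffices M ≤ 0 by
    have hgq : g q = 0 := le_antisymm ((hmax hq).trans this) (by positivity)
    simp only [g] at hgq
    exact ⟨abs_eq_zero.1 (by linarith [abs_nonneg (partialT u q), abs_nonneg (partialX u q)]),
      abs_eq_zero.1 (by linarith [abs_nonneg (partialT u q), abs_nonneg (partialX u q)])⟩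
  rcases hq₁.1.1.eq_or_lt with rfl | hx₁
  · simp [M, g, hbase t₁ hq₁.2]
  · have hinv : ∀ ε : ℝ, |ε| = 1 →
        |partialT u (t₁, x₁) + ε * c x₁ * partialX u (t₁, x₁)| ≤ K * M * (b - a) :=
      fun ε hε => abs_riemannInvariant_le hu hc hcpos hwave ha hbase hε hK hM hq₁ hx₁
    have := abs_add_abs_le_of_forall_abs_add_mul_le hm (hmc x₁ hq₁.1) hinv
    nlinarith

end Strip

theorem forall_mem_Icc_of_step {P : ℝ → Prop} {X δ : ℝ} (hδ : 0 < δ) (h₀ : P 0)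
    (hstep : ∀ a b, 0 ≤ a → a ≤ b → b ≤ X → b - a ≤ δ → P a → P b) :
    ∀ x ∈ Icc 0 X, P x := by
  have hmarch : ∀ n : ℕ, ∀ x ∈ Icc 0 X, x ≤ n * δ → P x := by
    intro n
    induction n with
    | zero =>
      intro x hx hxn
      rwa [le_antisymm (by simpa using hxn) hx.1]
    | succ n ih =>
      intro x hx hxn
      by_cases hle : x ≤ n * δ
      · exact ih x hx hle
      · have hn : 0 ≤ (n : ℝ) * δ := by positivity
        push_cast at hxn
        exact hstep _ x hn (not_le.1 hle).le hx.2 (by linarith)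
          (ih _ ⟨hn, (not_le.1 hle).le.trans hx.2⟩ le_rfl)
  intro x hx
  obtain ⟨n, hn⟩ := exists_nat_ge (x / δ)
  exact hmarch n x hx (by rwa [div_le_iff₀ hδ] at hn)

theorem partials_eq_zero_of_boundary (hu : DifferentiableOn ℝ (uncurry u) halfPlane)
    (hdir : ∀ t : ℝ, u t 0 = 0)
    (hneu : ∀ t : ℝ, derivWithin (fun y => u t y) (Ici 0) 0 = 0) (t : ℝ) :
    partialT u (t, 0) = 0 ∧ partialX u (t, 0) = 0 := by
  refine ⟨?_, ?_⟩
  · have h := hasDerivAt_partialT hu (t := t) le_rfl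
    rw [funext hdir] at h
    exact h.unique (hasDerivAt_const t 0)
  · exact ((hasDerivWithinAt_partialX hu (t := t) le_rfl).derivWithin
      (uniqueDiffOn_Ici 0 0 self_mem_Ici)).symm.trans (hneu t)

theorem partials_eq_zero (hu : ContDiffOn ℝ 2 (uncurry u) halfPlane)
    (hc : ContDiffOn ℝ 1 c (Ici 0)) (hcpos : ∀ x ∈ Ici (0:ℝ), 0 < c x) (hwave : SolvesWave c u)
    (h₀ : ∀ t, partialT u (t, 0) = 0 ∧ partialX u (t, 0) = 0) (t₀ : ℝ) {X : ℝ} (hX : 0 ≤ X) :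
    partialT u (t₀, X) = 0 ∧ partialX u (t₀, X) = 0 := by
  obtain ⟨z, hz, hzmin⟩ := isCompact_Icc.exists_isMinOn ⟨0, left_mem_Icc.2 hX⟩
    (hc.continuousOn.mono fun _ hs => hs.1)
  obtain ⟨K, hK⟩ := isCompact_Icc.exists_bound_of_continuousOn
    ((hc.continuousOn_derivWithin (uniqueDiffOn_Ici 0) le_rfl).mono
      fun _ hs => hs.1)
  have hK₀ : 0 ≤ K := (norm_nonneg _).trans (hK 0 (left_mem_Icc.2 hX))
  set m := c z
  have hm : 0 < m := hcpos z hz.1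
  set P := K * (1 + m⁻¹)
  have hP : 0 ≤ P := by positivity
  refine forall_mem_Icc_of_step (P := fun x => ∀ t, |t - t₀| ≤ travelTime c X - travelTime c x →
      partialT u (t, x) = 0 ∧ partialX u (t, x) = 0) (δ := (P + 1)⁻¹) (by positivity)
    (fun t _ => h₀ t) ?_ X ⟨hX, le_rfl⟩ t₀ (by simp)
  intro a b ha hab hbX hδ hPa t ht
  have hmc : ∀ s ∈ Icc a b, m ≤ c s := fun s hs => hzmin ⟨ha.trans hs.1, hs.2.trans hbX⟩
  have hKc : ∀ s ∈ Ioo a b, |deriv c s| ≤ K := by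
    intro s hs
    rw [← derivWithin_of_mem_nhds (Ici_mem_nhds (ha.trans_lt hs.1))]
    exact hK s ⟨(ha.trans_lt hs.1).le, hs.2.le.trans hbX⟩
  have hthin : K * (b - a) * (1 + m⁻¹) < 1 :=
    calc K * (b - a) * (1 + m⁻¹) = P * (b - a) := by ring
      _ ≤ P * (P + 1)⁻¹ := by gcongr
      _ < 1 := by rw [← div_eq_mul_inv, div_lt_one (by positivity)]; linarith
  exact partials_eq_zero_of_thin hu (hc.differentiableOn one_ne_zero) hcpos hwave ha hPa
    hm hmc hKc hthin (t, b) ⟨⟨hab, le_rfl⟩, ht⟩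

theorem eq_of_partialX_eq_zero (hu : DifferentiableOn ℝ (uncurry u) halfPlane) {t : ℝ}
    (hux : ∀ y ∈ Ici (0:ℝ), partialX u (t, y) = 0) {x : ℝ} (hx : 0 ≤ x) : u t x = u t 0 := by
  have hderiv : ∀ y ∈ Ici (0:ℝ), HasDerivWithinAt (u t) 0 (Ici 0) y := fun y hy =>
    (hasDerivWithinAt_partialX hu hy).congr_deriv (hux y hy)
  refine constant_of_has_deriv_right_zero
    (fun y hy => (hderiv y hy.1).continuousWithinAt.mono Icc_subset_Ici_self)
    (fun y hy => (hderiv y hy.1).mono (Ici_subset_Ici.2 hy.1)) x ⟨hx, le_rfl⟩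

end LateralWave

open LateralWave in
theorem statement3_general
    (c : ℝ → ℝ)
    (hcC : ContDiffOn ℝ 2 c (Ici 0))
    (hcpos : ∀ x ∈ Ici (0:ℝ), 0 < c x)
    (u : ℝ → ℝ → ℝ)
    (hu : ContDiffOn ℝ 2 (Function.uncurry u) ((univ : Set ℝ) ×ˢ Ici 0))
    (heq : ∀ t : ℝ, ∀ x > (0:ℝ),
      deriv (fun s => deriv (fun r => u r x) s) t
        = (c x)^2 * deriv (fun y => deriv (fun z => u t z) y) x)
    (hdir : ∀ t : ℝ, u t 0 = 0)
    (hneu : ∀ t : ℝ, derivWithin (fun y => u t y) (Ici 0) 0 = 0) :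
    ∀ t : ℝ, ∀ x ∈ Ici (0:ℝ), u t x = 0 := by
  have hu₁ : DifferentiableOn ℝ (uncurry u) halfPlane := hu.differentiableOn two_ne_zero
  have h₀ := partials_eq_zero_of_boundary hu₁ hdir hneu
  intro t x hx
  have hux : ∀ y ∈ Ici (0:ℝ), partialX u (t, y) = 0 :=
    fun y hy => (partials_eq_zero hu (hcC.of_le one_le_two) hcpos heq h₀ t hy).2
  rw [eq_of_partialX_eq_zero hu₁ hux hx, hdir t]

/-- lateral (sideways) uniqueness for the variable-speed 1D wave equation:
vanishing Cauchy data on the whole time-line `{x = 0}` forces the solution to vanish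
identically on `ℝ × [0,∞)`. -/
theorem statement3
    (c0 : ℝ) (hc0 : 0 < c0) (c : ℝ → ℝ)
    (hcC : ContDiffOn ℝ 2 c (Ici 0))
    (hcpos : ∀ x ∈ Ici (0:ℝ), 0 < c x)
    (hcconst : ∀ x ∈ Ici (1:ℝ), c x = c0)
    (u : ℝ → ℝ → ℝ)
    (hu : ContDiffOn ℝ 2 (Function.uncurry u) ((univ : Set ℝ) ×ˢ Ici 0))
    (heq : ∀ t : ℝ, ∀ x > (0:ℝ),
      deriv (fun s => deriv (fun r => u r x) s) t
        = (c x)^2 * deriv (fun y => deriv (fun z => u t z) y) x)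
    (hdir : ∀ t : ℝ, u t 0 = 0)
    (hneu : ∀ t : ℝ, derivWithin (fun y => u t y) (Ici 0) 0 = 0) :
    ∀ t : ℝ, ∀ x ∈ Ici (0:ℝ), u t x = 0 :=
  statement3_general c hcC hcpos u hu heq hdir hneu
end

section
/- Let c be a wave speed (for a constant c0 > 0). Then there exist constants C_0, C_1, λ > 0 such that for every z ∈ ℂ one has C_0 e^{−λ|z|} ≤ |v_c(z,1)| + |∂_x v_c(z,1)| ≤ C_1 e^{λ|z|}. -/
open Set

/-- `c` is a wave speed for the constant `c0 > 0`: a positive `C²` function on `[0,∞)`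
equal to `c0` outside `(0,1)`. -/
def IsWaveSpeed (c0 : ℝ) (c : ℝ → ℝ) : Prop :=
  ContDiffOn ℝ 2 c (Ici 0) ∧ (∀ x ∈ Ici (0:ℝ), 0 < c x) ∧
    ∀ x ∈ Ici (0:ℝ), x ∉ Ioo (0:ℝ) 1 → c x = c0

/-- `v = v_c` is the family of solutions of `-c(x)² ∂²ₓ v(z,x) = z² v(z,x)` with
`v(z,0) = 0`, `∂ₓ v(z,0) = 1`. -/
def IsFreqSolution (c : ℝ → ℝ) (v : ℂ → ℝ → ℂ) : Prop :=
  ∀ z : ℂ, ContDiff ℝ 2 (v z) ∧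
    (∀ x ∈ Ici (0:ℝ), -(c x : ℂ)^2 * deriv (deriv (v z)) x = z^2 * v z x) ∧
    v z 0 = 0 ∧ deriv (v z) 0 = 1

/-!
Write `r = ‖z‖`, `ρ = 1 + r` and `f = v_c(z,·)`. On `[0,1]` the speed is bounded below, so
`‖f''‖ ≤ K r² ‖f‖`, and the scaled Cauchy data `W = (ρ f, f')` satisfy `‖W'‖ ≤ K ρ ‖W‖`.
Grönwall's inequality, run forwards and backwards in `x`, gives
`e^{-Kρ} ≤ ‖W(1)‖ ≤ e^{Kρ}` since `‖W(0)‖ = 1`, and `‖W(1)‖` is comparable to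
`‖f(1)‖ + ‖f'(1)‖` up to the factor `ρ ≤ e^r`.
-/

open Real

section Gronwall

variable {E : Type*} [NormedAddCommGroup E] [NormedSpace ℝ E] {W W' : ℝ → E} {K a b : ℝ}

theorem norm_right_le_norm_left_mul_exp (hab : a ≤ b)
    (hW : ∀ x ∈ Icc a b, HasDerivAt W (W' x) x) (hK : ∀ x ∈ Icc a b, ‖W' x‖ ≤ K * ‖W x‖) :
    ‖W b‖ ≤ ‖W a‖ * exp (K * (b - a)) := by
  have h := norm_le_gronwallBound_of_norm_deriv_right_le (K := K) (ε := 0)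
    (fun x hx => (hW x hx).continuousAt.continuousWithinAt)
    (fun x hx => (hW x (Ico_subset_Icc_self hx)).hasDerivWithinAt) le_rfl
    (fun x hx => (add_zero (K * ‖W x‖)).symm ▸ hK x (Ico_subset_Icc_self hx)) b ⟨hab, le_rfl⟩
  rwa [gronwallBound_ε0] at h

theorem norm_left_le_norm_right_mul_exp (hab : a ≤ b)
    (hW : ∀ x ∈ Icc a b, HasDerivAt W (W' x) x) (hK : ∀ x ∈ Icc a b, ‖W' x‖ ≤ K * ‖W x‖) :
    ‖W a‖ ≤ ‖W b‖ * exp (K * (b - a)) := by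
  have hmem : ∀ x ∈ Icc a b, a + b - x ∈ Icc a b := fun x hx =>
    ⟨by linarith [hx.2], by linarith [hx.1]⟩
  have h := norm_right_le_norm_left_mul_exp (W := fun x => W (a + b - x))
    (W' := fun x => -W' (a + b - x)) (K := K) hab
    (fun x hx => by
      simpa [Function.comp_def] using
        (hW _ (hmem x hx)).scomp x ((hasDerivAt_id x).const_sub (a + b)))
    (fun x hx => by simpa using hK _ (hmem x hx))
  simpa using h

end Gronwall

section ScaledCauchyData

variable {f : ℝ → ℂ} {ρ K r : ℝ}

noncomputable def scaledCauchyData (ρ : ℝ) (f : ℝ → ℂ) (x : ℝ) : ℂ × ℂ := (ρ • f x, deriv f x)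

theorem norm_scaledCauchyData (hρ : 0 ≤ ρ) (x : ℝ) :
    ‖scaledCauchyData ρ f x‖ = max (ρ * ‖f x‖) ‖deriv f x‖ := by
  simp [scaledCauchyData, abs_of_nonneg hρ]

theorem hasDerivAt_scaledCauchyData (hf : ContDiff ℝ 2 f) (x : ℝ) :
    HasDerivAt (scaledCauchyData ρ f) (ρ • deriv f x, deriv (deriv f) x) x := by
  have hf' : ContDiff ℝ 1 (deriv f) := hf.iterate_deriv' 1 1
  exact ((hf.differentiable (by norm_num) x).hasDerivAt.const_smul ρ).prodMk
    (hf'.differentiable one_ne_zero x).hasDerivAt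

theorem norm_prod_smul_le {E : Type*} [NormedAddCommGroup E] [NormedSpace ℝ E] {p q s : E}
    (hρ : 0 ≤ ρ) (hK : 1 ≤ K) (hs : ‖s‖ ≤ K * ρ ^ 2 * ‖p‖) :
    ‖(ρ • q, s)‖ ≤ K * ρ * ‖(ρ • p, q)‖ := by
  simp only [Prod.norm_mk, norm_smul, norm_of_nonneg hρ]
  set M := max (ρ * ‖p‖) ‖q‖
  have hM : 0 ≤ M := (norm_nonneg q).trans (le_max_right _ _)
  refine max_le ?_ ?_
  · nlinarith [mul_le_mul_of_nonneg_left (le_max_right (ρ * ‖p‖) ‖q‖) hρ,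
      mul_nonneg (mul_nonneg (sub_nonneg.2 hK) hρ) hM]
  · nlinarith [mul_le_mul_of_nonneg_left (le_max_left (ρ * ‖p‖) ‖q‖)
      (mul_nonneg (zero_le_one.trans hK) hρ)]

theorem norm_scaledCauchyData_one_mem_Icc (hf : ContDiff ℝ 2 f) (hρ : 0 ≤ ρ) (hK : 1 ≤ K)
    (hf0 : f 0 = 0) (hf'0 : deriv f 0 = 1)
    (h : ∀ x ∈ Icc (0 : ℝ) 1, ‖deriv (deriv f) x‖ ≤ K * ρ ^ 2 * ‖f x‖) :
    ‖scaledCauchyData ρ f 1‖ ∈ Icc (exp (-(K * ρ))) (exp (K * ρ)) := by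
  have hW : ∀ x ∈ Icc (0 : ℝ) 1,
      HasDerivAt (scaledCauchyData ρ f) (ρ • deriv f x, deriv (deriv f) x) x :=
    fun x _ => hasDerivAt_scaledCauchyData hf x
  have hbound : ∀ x ∈ Icc (0 : ℝ) 1,
      ‖(ρ • deriv f x, deriv (deriv f) x)‖ ≤ K * ρ * ‖scaledCauchyData ρ f x‖ :=
    fun x hx => norm_prod_smul_le hρ hK (h x hx)
  have hW0 : ‖scaledCauchyData ρ f 0‖ = 1 := by simp [norm_scaledCauchyData hρ, hf0, hf'0]
  have hfwd := norm_right_le_norm_left_mul_exp zero_le_one hW hbound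
  have hbwd := norm_left_le_norm_right_mul_exp zero_le_one hW hbound
  rw [hW0, sub_zero, mul_one] at hfwd hbwd
  refine ⟨?_, by linarith⟩
  rw [exp_neg, inv_le_iff_one_le_mul₀' (exp_pos _)]
  linarith

theorem exp_bounds_of_norm_deriv_deriv_le (hf : ContDiff ℝ 2 f) (hr : 0 ≤ r) (hK : 1 ≤ K)
    (hf0 : f 0 = 0) (hf'0 : deriv f 0 = 1)
    (h : ∀ x ∈ Icc (0 : ℝ) 1, ‖deriv (deriv f) x‖ ≤ K * r ^ 2 * ‖f x‖) :
    exp (-K) * exp (-(K + 1) * r) ≤ ‖f 1‖ + ‖deriv f 1‖ ∧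
      ‖f 1‖ + ‖deriv f 1‖ ≤ 2 * exp K * exp ((K + 1) * r) := by
  have hρ : (0 : ℝ) ≤ 1 + r := by linarith
  have hr2 : r ^ 2 ≤ (1 + r) ^ 2 := by nlinarith
  obtain ⟨hlow, hupp⟩ := norm_scaledCauchyData_one_mem_Icc hf hρ hK hf0 hf'0 fun x hx =>
    (h x hx).trans (by gcongr)
  rw [norm_scaledCauchyData hρ] at hlow hupp
  set a := ‖f 1‖
  set b := ‖deriv f 1‖
  have ha : 0 ≤ a := norm_nonneg _
  have hb : 0 ≤ b := norm_nonneg _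
  have hρexp : 1 + r ≤ exp r := by linarith [add_one_le_exp r]
  constructor
  · calc exp (-K) * exp (-(K + 1) * r) = exp (-(K * (1 + r))) * exp (-r) := by
          rw [← exp_add, ← exp_add]; ring_nf
      _ ≤ max ((1 + r) * a) b * exp (-r) := by gcongr
      _ ≤ ((1 + r) * (a + b)) * exp (-r) := by
          gcongr; exact max_le (by nlinarith) (by nlinarith)
      _ ≤ (exp r * (a + b)) * exp (-r) := by gcongr
      _ = a + b := by rw [mul_comm, ← mul_assoc, ← exp_add]; simp
  · calc a + b ≤ 2 * max ((1 + r) * a) b := by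
          nlinarith [le_max_left ((1 + r) * a) b, le_max_right ((1 + r) * a) b]
      _ ≤ 2 * exp (K * (1 + r)) := by gcongr
      _ ≤ 2 * exp K * exp ((K + 1) * r) := by
          rw [mul_assoc, ← exp_add]; gcongr; nlinarith

end ScaledCauchyData

theorem IsCompact.exists_one_le_forall_inv_sq_le {s : Set ℝ} {c : ℝ → ℝ} (hs : IsCompact s)
    (hc : ContinuousOn c s) (hpos : ∀ x ∈ s, 0 < c x) :
    ∃ K : ℝ, 1 ≤ K ∧ ∀ x ∈ s, (c x ^ 2)⁻¹ ≤ K := by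
  obtain ⟨C, hC⟩ := hs.exists_bound_of_continuousOn
    ((hc.pow 2).inv₀ fun x hx => pow_ne_zero 2 (hpos x hx).ne')
  exact ⟨max 1 C, le_max_left _ _, fun x hx =>
    (le_abs_self _).trans ((hC x hx).trans (le_max_right _ _))⟩

theorem norm_le_of_neg_sq_mul_eq {γ K : ℝ} {z u w : ℂ} (hγ : γ ≠ 0) (hK : (γ ^ 2)⁻¹ ≤ K)
    (h : -(γ : ℂ) ^ 2 * u = z ^ 2 * w) : ‖u‖ ≤ K * ‖z‖ ^ 2 * ‖w‖ := by
  have hnorm : γ ^ 2 * ‖u‖ = ‖z‖ ^ 2 * ‖w‖ := by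
    simpa [norm_mul, norm_pow, Complex.norm_real, sq_abs] using congrArg norm h
  calc ‖u‖ = (γ ^ 2)⁻¹ * (‖z‖ ^ 2 * ‖w‖) := by
        rw [← hnorm, inv_mul_cancel_left₀ (pow_ne_zero 2 hγ)]
    _ ≤ K * ‖z‖ ^ 2 * ‖w‖ := by rw [← mul_assoc]; gcongr

theorem statement5_general
    (c0 : ℝ) (c : ℝ → ℝ) (hc : IsWaveSpeed c0 c)
    (v : ℂ → ℝ → ℂ) (hv : IsFreqSolution c v) :
    ∃ C₀ > (0:ℝ), ∃ C₁ > (0:ℝ), ∃ lam > (0:ℝ), ∀ z : ℂ,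
      C₀ * Real.exp (-lam * ‖z‖)
          ≤ ‖v z 1‖ + ‖deriv (v z) 1‖ ∧
      ‖v z 1‖ + ‖deriv (v z) 1‖
          ≤ C₁ * Real.exp (lam * ‖z‖) := by
  obtain ⟨hcC2, hcpos, -⟩ := hc
  obtain ⟨K, hK, hcK⟩ := isCompact_Icc.exists_one_le_forall_inv_sq_le
    (hcC2.continuousOn.mono Icc_subset_Ici_self) fun x hx => hcpos x hx.1
  refine ⟨exp (-K), exp_pos _, 2 * exp K, by positivity, K + 1, by linarith, fun z => ?_⟩
  obtain ⟨hC2, hode, h0, h'0⟩ := hv z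
  exact exp_bounds_of_norm_deriv_deriv_le hC2 (norm_nonneg z) hK h0 h'0 fun x hx =>
    norm_le_of_neg_sq_mul_eq (hcpos x hx.1).ne' (hcK x hx) (hode x hx.1)

/-- two-sided exponential bounds for `|v_c(z,1)| + |∂ₓ v_c(z,1)|`. -/
theorem statement5
    (c0 : ℝ) (hc0 : 0 < c0) (c : ℝ → ℝ) (hc : IsWaveSpeed c0 c)
    (v : ℂ → ℝ → ℂ) (hv : IsFreqSolution c v) :
    ∃ C₀ > (0:ℝ), ∃ C₁ > (0:ℝ), ∃ lam > (0:ℝ), ∀ z : ℂ,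
      C₀ * Real.exp (-lam * ‖z‖)
          ≤ ‖v z 1‖ + ‖deriv (v z) 1‖ ∧
      ‖v z 1‖ + ‖deriv (v z) 1‖
          ≤ C₁ * Real.exp (lam * ‖z‖) :=
  statement5_general c0 c hc v hv
end

section
/- For j = 1,2 let c_j be a wave speed (for the same constant c0 > 0). If for every ξ > 0 one has v_{c_1}(ξ,1) = 0 if and only if v_{c_2}(ξ,1) = 0, then ∫₀¹ dx/c_1(x) = ∫₀¹ dx/c_2(x). -/
/-!
For `ξ ≠ 0` write `v = v_c(ξ,·)` in modified Prüfer form, `v = r sin θ`, `c v' / ξ = r cos θ`,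
`θ(0) = 0`. Then `θ' = ξ / c - (c' / c) sin θ cos θ` on `[0,1]`, and `v(1) = 0` iff `θ(1) ∈ πℤ`.
For `ξ < η` the difference `u = θ_η - θ_ξ` satisfies `|u' - (η - ξ) / c| ≤ sup |c'/c| · |u|`, so
the phase `F(ξ) = θ_ξ(1)` is strictly increasing and Lipschitz on `ξ > 0`; integrating the
equation for `θ` gives `|F(ξ) - ξ T| ≤ sup |c'/c| / 2` with `T = ∫₀¹ 1/c`. Hence the positive
Dirichlet frequencies are the solutions of `F(ξ) ∈ πℤ`, the `n`-th one satisfies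
`ξ_n T = nπ + O(1)`, and two media sharing them have the same `T`.
-/

open Set

/-- `v = v_c` is the family of real solutions of `-c(x)² ∂²ₓ v(ξ,x) = ξ² v(ξ,x)` with
`v(ξ,0) = 0`, `∂ₓ v(ξ,0) = 1`. -/
def IsRealFreqSolution (c : ℝ → ℝ) (v : ℝ → ℝ → ℝ) : Prop :=
  ∀ ξ : ℝ, ContDiff ℝ 2 (v ξ) ∧
    (∀ x ∈ Ici (0:ℝ), -(c x)^2 * deriv (deriv (v ξ)) x = ξ^2 * v ξ x) ∧
    v ξ 0 = 0 ∧ deriv (v ξ) 0 = 1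

open Real Filter

theorem pos_of_deriv_right_ge_neg_mul {ρ ρ' : ℝ → ℝ} {a b K : ℝ}
    (hρ : ContinuousOn ρ (Icc a b)) (hρ' : ∀ x ∈ Ico a b, HasDerivWithinAt ρ (ρ' x) (Ici x) x)
    (hbound : ∀ x ∈ Ico a b, -K * ρ x ≤ ρ' x) (ha : 0 < ρ a) : ∀ x ∈ Icc a b, 0 < ρ x := by
  set M := |K| + 1
  have hMK : 0 < M - K := by linarith [le_abs_self K]
  set f : ℝ → ℝ := fun x => ρ a / 2 * exp (-M * (x - a)) with hf_def
  have hf_pos (x : ℝ) : 0 < f x := by positivity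
  have hf (x : ℝ) : HasDerivAt f (-M * f x) x :=
    ((((hasDerivAt_id x).sub_const a).const_mul (-M)).exp.const_mul (ρ a / 2)).congr_deriv
      (by simp only [hf_def, id]; ring)
  have hfρ := image_le_of_deriv_right_lt_deriv_boundary'
    (fun x _ => (hf x).continuousAt.continuousWithinAt) (fun x _ => (hf x).hasDerivWithinAt)
    (by simp only [hf_def, sub_self, mul_zero, exp_zero, mul_one]; linarith) hρ hρ'
    fun x hx hfx => by
      have := hbound x hx
      rw [← hfx] at this
      nlinarith [mul_pos hMK (hf_pos x)]
  exact fun x hx => (hf_pos x).trans_le (hfρ hx)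

theorem pos_of_deriv_right_ge_sub_mul_abs {u u' : ℝ → ℝ} {a b δ L : ℝ} (hab : a < b)
    (hδ : 0 < δ) (hL : 0 ≤ L) (hu : ContinuousOn u (Icc a b))
    (hu' : ∀ x ∈ Ico a b, HasDerivWithinAt u (u' x) (Ici x) x)
    (hbound : ∀ x ∈ Ico a b, δ - L * |u x| ≤ u' x) (ha : u a = 0) : 0 < u b := by
  -- `u` stays above the line `κ (x - a)`: wherever they meet, `u' ≥ δ - L κ (b - a) > κ`.
  set κ := δ / (2 * (1 + L * (b - a)))
  have hκ : 0 < κ := by positivity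
  have hκδ : κ * (1 + L * (b - a)) = δ / 2 := by
    have : 0 < 1 + L * (b - a) := by nlinarith
    simp only [κ]
    field_simp
  have hf (x : ℝ) : HasDerivAt (fun x => κ * (x - a)) κ x := by
    simpa using ((hasDerivAt_id x).sub_const a).const_mul κ
  have hle := image_le_of_deriv_right_lt_deriv_boundary'
    (fun x _ => (hf x).continuousAt.continuousWithinAt) (fun x _ => (hf x).hasDerivWithinAt)
    (by rw [sub_self, mul_zero, ha]) hu hu' fun x hx hux => by
      have := hbound x hx
      rw [← hux, abs_of_nonneg (by nlinarith [hx.1])] at this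
      nlinarith [mul_le_mul_of_nonneg_left (by linarith [hx.2] : x - a ≤ b - a)
        (by positivity : 0 ≤ L * κ)]
  have := hle (right_mem_Icc.2 hab.le)
  nlinarith

theorem abs_sin_mul_cos_sub_le (a b : ℝ) : |sin a * cos a - sin b * cos b| ≤ |a - b| := by
  have h := abs_sin_sub_sin_le (2 * a) (2 * b)
  rw [sin_two_mul, sin_two_mul, ← mul_sub, mul_assoc, mul_assoc, ← mul_sub, abs_mul, abs_mul,
    abs_two] at h
  linarith

theorem abs_mul_div_sq_add_sq_le_half (a b : ℝ) : |a * b / (a ^ 2 + b ^ 2)| ≤ 1 / 2 := by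
  rw [abs_div, abs_mul, abs_of_nonneg (by positivity : 0 ≤ a ^ 2 + b ^ 2)]
  rcases eq_or_lt_of_le (by positivity : 0 ≤ a ^ 2 + b ^ 2) with h | h
  · simp [← h]
  · rw [div_le_iff₀ h, ← sq_abs a, ← sq_abs b]
    nlinarith [sq_nonneg (|a| - |b|)]

theorem mul_cos_eq_mul_sin_of_hasDerivWithinAt {V W V' W' θ θ' : ℝ → ℝ} {a b : ℝ}
    (hV : ContinuousOn V (Icc a b)) (hW : ContinuousOn W (Icc a b))
    (hV'c : ContinuousOn V' (Icc a b)) (hW'c : ContinuousOn W' (Icc a b))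
    (hθ : ContinuousOn θ (Icc a b))
    (hV' : ∀ x ∈ Ico a b, HasDerivWithinAt V (V' x) (Ici x) x)
    (hW' : ∀ x ∈ Ico a b, HasDerivWithinAt W (W' x) (Ici x) x)
    (hθ' : ∀ x ∈ Ico a b, HasDerivWithinAt θ (θ' x) (Ici x) x)
    (hrate : ∀ x ∈ Ico a b, θ' x * (V x ^ 2 + W x ^ 2) = V' x * W x - V x * W' x)
    (hρ : ∀ x ∈ Icc a b, V x ^ 2 + W x ^ 2 ≠ 0)
    (ha : V a * cos (θ a) = W a * sin (θ a)) :
    ∀ x ∈ Icc a b, V x * cos (θ x) = W x * sin (θ x) := by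
  -- `g = V cos θ - W sin θ` solves the linear equation `g' = ψ g` and vanishes at `a`.
  set ψ := fun x => (V x * V' x + W x * W' x) / (V x ^ 2 + W x ^ 2)
  obtain ⟨K, hK⟩ := isCompact_Icc.exists_bound_of_continuousOn (f := ψ)
    (((hV.mul hV'c).add (hW.mul hW'c)).div ((hV.pow 2).add (hW.pow 2)) hρ)
  have hg' : ∀ x ∈ Ico a b, HasDerivWithinAt (fun x => V x * cos (θ x) - W x * sin (θ x))
      (ψ x * (V x * cos (θ x) - W x * sin (θ x))) (Ici x) x := by
    intro x hx
    refine (((hV' x hx).mul (hθ' x hx).cos).sub ((hW' x hx).mul (hθ' x hx).sin)).congr_deriv ?_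
    simp only [ψ]
    field_simp [hρ x (Ico_subset_Icc_self hx)]
    linear_combination (-(V x * sin (θ x) + W x * cos (θ x))) * hrate x hx
  have hg := eq_zero_of_abs_deriv_le_mul_abs_self_of_eq_zero_right
    ((hV.mul (continuous_cos.comp_continuousOn hθ)).sub
      (hW.mul (continuous_sin.comp_continuousOn hθ))) hg' (sub_eq_zero.2 ha) fun x hx => by
      rw [norm_mul]
      exact mul_le_mul_of_nonneg_right (hK x (Ico_subset_Icc_self hx)) (norm_nonneg _)
  exact fun x hx => sub_eq_zero.1 (hg x hx)

structure IsPhaseOfSlope (F : ℝ → ℝ) (T : ℝ) : Prop where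
  strictMonoOn : StrictMonoOn F (Ioi 0)
  continuousOn : ContinuousOn F (Ioi 0)
  exists_abs_sub_le : ∃ K, ∀ ξ > 0, |F ξ - ξ * T| ≤ K

theorem sin_ne_zero_of_lt_of_lt_add_pi {x y : ℝ} (hx : sin x = 0) (hxy : x < y)
    (hyx : y < x + π) : sin y ≠ 0 := by
  obtain ⟨k, rfl⟩ := sin_eq_zero_iff.1 hx
  intro hy
  obtain ⟨m, rfl⟩ := sin_eq_zero_iff.1 hy
  have h₁ : (k : ℝ) < m := lt_of_mul_lt_mul_right hxy pi_pos.le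
  have h₂ : (m : ℝ) < k + 1 := lt_of_mul_lt_mul_right (by linarith) pi_pos.le
  norm_cast at h₁ h₂
  omega

theorem eq_add_pi_of_sin_eq_zero {F : ℝ → ℝ} {a b : ℝ} (hab : a ≤ b)
    (hF : ContinuousOn F (Icc a b)) (hlt : F a < F b) (ha : sin (F a) = 0)
    (hb : sin (F b) = 0) (hbetween : ∀ x ∈ Ioo a b, sin (F x) ≠ 0) : F b = F a + π := by
  have hge : F a + π ≤ F b := not_lt.1 fun h => sin_ne_zero_of_lt_of_lt_add_pi ha hlt h hb
  refine le_antisymm (not_lt.1 fun h => ?_) hge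
  obtain ⟨x, hx, hFx⟩ := intermediate_value_Ioo hab hF ⟨by linarith [pi_pos], h⟩
  exact hbetween x hx (by rw [hFx, sin_add_pi, ha, neg_zero])

theorem eq_add_pi_of_eq_add_pi {F₁ F₂ : ℝ → ℝ} (hF₁ : StrictMonoOn F₁ (Ioi 0))
    (hF₂ : StrictMonoOn F₂ (Ioi 0)) (hF₂c : ContinuousOn F₂ (Ioi 0))
    (hzeros : ∀ ξ > 0, sin (F₁ ξ) = 0 ↔ sin (F₂ ξ) = 0) {a b : ℝ} (ha : 0 < a) (hb : 0 < b)
    (hsin : sin (F₁ a) = 0) (hab : F₁ b = F₁ a + π) : F₂ b = F₂ a + π := by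
  have hlt : a < b := (hF₁.lt_iff_lt ha hb).1 (by rw [hab]; linarith [pi_pos])
  refine eq_add_pi_of_sin_eq_zero hlt.le (hF₂c.mono fun x hx => ha.trans_le hx.1)
    (hF₂ ha hb hlt) ((hzeros a ha).1 hsin)
    ((hzeros b hb).1 (by rw [hab, sin_add_pi, hsin, neg_zero])) fun x hx => ?_
  have hx₀ : 0 < x := ha.trans hx.1
  refine mt (hzeros x hx₀).2 (sin_ne_zero_of_lt_of_lt_add_pi hsin (hF₁ ha hx₀ hx.1) ?_)
  rw [← hab]
  exact hF₁ hx₀ hb hx.2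

namespace IsPhaseOfSlope

variable {F F₁ F₂ : ℝ → ℝ} {T T₁ T₂ : ℝ}

theorem exists_eq (hF : IsPhaseOfSlope F T) (hT : 0 < T) {a y : ℝ} (ha : 0 < a)
    (hy : F a ≤ y) : ∃ ξ, a ≤ ξ ∧ F ξ = y := by
  obtain ⟨K, hK⟩ := hF.exists_abs_sub_le
  set b := max a ((y + K) / T)
  have hb : y ≤ F b := by
    have h₁ := (abs_le.1 (hK b (ha.trans_le (le_max_left _ _)))).1
    have h₂ := mul_le_mul_of_nonneg_right (le_max_right a ((y + K) / T)) hT.le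
    rw [div_mul_cancel₀ _ hT.ne'] at h₂
    linarith
  obtain ⟨ξ, hξ, hFξ⟩ := intermediate_value_Icc (le_max_left a _)
    (hF.continuousOn.mono fun x hx => ha.trans_le hx.1) ⟨hy, hb⟩
  exact ⟨ξ, hξ.1, hFξ⟩

theorem slope_eq_of_forall_sub_eq (h₁ : IsPhaseOfSlope F₁ T₁) (h₂ : IsPhaseOfSlope F₂ T₂)
    {ξ : ℕ → ℝ} {D : ℝ} (hξ : Tendsto ξ atTop atTop) (hD : ∀ n, F₁ (ξ n) - F₂ (ξ n) = D) :
    T₁ = T₂ := by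
  obtain ⟨K₁, hK₁⟩ := h₁.exists_abs_sub_le
  obtain ⟨K₂, hK₂⟩ := h₂.exists_abs_sub_le
  have hbound : ∀ᶠ n in atTop, ξ n * |T₁ - T₂| ≤ K₁ + K₂ + |D| := by
    filter_upwards [hξ.eventually_gt_atTop 0] with n hn
    calc ξ n * |T₁ - T₂| = |ξ n * (T₁ - T₂)| := by rw [abs_mul, abs_of_pos hn]
      _ = |D + (ξ n * T₁ - F₁ (ξ n)) + (F₂ (ξ n) - ξ n * T₂)| := by rw [← hD n]; ring_nf
      _ ≤ |D| + |ξ n * T₁ - F₁ (ξ n)| + |F₂ (ξ n) - ξ n * T₂| := abs_add_three _ _ _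
      _ ≤ K₁ + K₂ + |D| := by
        rw [abs_sub_comm (ξ n * T₁)]
        linarith [hK₁ _ hn, hK₂ _ hn]
  by_contra hne
  have hd : 0 < |T₁ - T₂| := abs_pos.2 (sub_ne_zero.2 hne)
  obtain ⟨n, hn, hn'⟩ :=
    (hbound.and ((hξ.atTop_mul_const hd).eventually_gt_atTop (K₁ + K₂ + |D|))).exists
  linarith

theorem slope_eq (h₁ : IsPhaseOfSlope F₁ T₁) (h₂ : IsPhaseOfSlope F₂ T₂) (hT₁ : 0 < T₁)
    (hzeros : ∀ ξ > 0, sin (F₁ ξ) = 0 ↔ sin (F₂ ξ) = 0) : T₁ = T₂ := by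
  obtain ⟨ξ₀, hξ₀, hF₀⟩ := h₁.exists_eq hT₁ one_pos
    (y := ⌈F₁ 1 / π⌉ * π) ((div_le_iff₀ pi_pos).1 (Int.le_ceil _))
  have hξ₀ : 0 < ξ₀ := one_pos.trans_le hξ₀
  choose ξ hξ hFξ using fun n : ℕ =>
    h₁.exists_eq hT₁ hξ₀ (le_add_of_nonneg_right (by positivity : 0 ≤ (n : ℝ) * π))
  have hpos (n : ℕ) : 0 < ξ n := hξ₀.trans_le (hξ n)
  have hF₂ (n : ℕ) : F₂ (ξ n) = F₂ (ξ 0) + n * π := by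
    induction n with
    | zero => simp
    | succ n ih =>
      rw [eq_add_pi_of_eq_add_pi h₁.strictMonoOn h₂.strictMonoOn h₂.continuousOn hzeros
        (hpos n) (hpos _) (by rw [hFξ, sin_add_nat_mul_pi, hF₀, sin_int_mul_pi, mul_zero])
        (by rw [hFξ, hFξ]; push_cast; ring), ih]
      push_cast
      ring
  obtain ⟨K₁, hK₁⟩ := h₁.exists_abs_sub_le
  have hlin : Tendsto (fun n : ℕ => ((n : ℝ) * π + (F₁ ξ₀ - K₁)) / T₁) atTop atTop :=
    ((tendsto_natCast_atTop_atTop.atTop_mul_const pi_pos).atTop_add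
      tendsto_const_nhds).atTop_div_const hT₁
  refine h₁.slope_eq_of_forall_sub_eq h₂ (ξ := ξ) (D := F₁ (ξ 0) - F₂ (ξ 0))
    (tendsto_atTop_mono (fun n => ?_) hlin) fun n => ?_
  · rw [div_le_iff₀ hT₁]
    linarith [(abs_le.1 (hK₁ _ (hpos n))).2, hFξ n]
  · rw [hFξ n, hF₂ n, hFξ 0]
    push_cast
    ring

end IsPhaseOfSlope

structure IsRegularSpeed (c : ℝ → ℝ) : Prop where
  contDiffOn : ContDiffOn ℝ 1 c (Icc 0 1)
  pos : ∀ x ∈ Icc (0:ℝ) 1, 0 < c x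

structure IsIVPSolution (c : ℝ → ℝ) (ξ : ℝ) (V : ℝ → ℝ) : Prop where
  contDiff : ContDiff ℝ 2 V
  ode : ∀ x ∈ Icc (0:ℝ) 1, -(c x) ^ 2 * deriv (deriv V) x = ξ ^ 2 * V x
  apply_zero : V 0 = 0
  deriv_zero : deriv V 0 = 1

noncomputable def travelTime (c : ℝ → ℝ) : ℝ := ∫ x in (0:ℝ)..1, (c x)⁻¹

/-- Together with `V = r sin θ`, this is `r cos θ`. -/
noncomputable def pruferW (c V : ℝ → ℝ) (ξ x : ℝ) : ℝ := c x * deriv V x / ξ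

noncomputable def pruferRate (c V : ℝ → ℝ) (ξ x : ℝ) : ℝ :=
  ξ / c x - derivWithin c (Icc 0 1) x / c x *
    (V x * pruferW c V ξ x / (V x ^ 2 + pruferW c V ξ x ^ 2))

noncomputable def pruferAngle (c V : ℝ → ℝ) (ξ x : ℝ) : ℝ :=
  ∫ t in (0:ℝ)..x, IccExtend zero_le_one ((Icc (0:ℝ) 1).domRestrict (pruferRate c V ξ)) t

theorem deriv_eq_div_mul_pruferW {c V : ℝ → ℝ} {ξ x : ℝ} (hcx : c x ≠ 0) (hξ : ξ ≠ 0) :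
    deriv V x = ξ / c x * pruferW c V ξ x := by
  rw [pruferW]
  field_simp

theorem hasDerivAt_pruferAngle {c V : ℝ → ℝ} {ξ : ℝ}
    (hrate : ContinuousOn (pruferRate c V ξ) (Icc 0 1)) {x : ℝ} (hx : x ∈ Icc (0:ℝ) 1) :
    HasDerivAt (pruferAngle c V ξ) (pruferRate c V ξ x) x := by
  have := (hrate.domRestrict.Icc_extend' (h := zero_le_one)).integral_hasStrictDerivAt 0 x
  rw [IccExtend_of_mem _ _ hx] at this
  exact this.hasDerivAt

namespace IsRegularSpeed

variable {c : ℝ → ℝ}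

theorem hasDerivWithinAt (hc : IsRegularSpeed c) {x : ℝ} (hx : x ∈ Ico (0:ℝ) 1) :
    HasDerivWithinAt c (derivWithin c (Icc 0 1) x) (Ici x) x :=
  ((hc.contDiffOn.differentiableOn one_ne_zero x
    (Ico_subset_Icc_self hx)).hasDerivWithinAt).mono_of_mem_nhdsWithin (Icc_mem_nhdsGE_of_mem hx)

theorem continuousOn_derivWithin_div (hc : IsRegularSpeed c) :
    ContinuousOn (fun x => derivWithin c (Icc 0 1) x / c x) (Icc 0 1) :=
  (hc.contDiffOn.continuousOn_derivWithin (uniqueDiffOn_Icc zero_lt_one) le_rfl).div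
    hc.contDiffOn.continuousOn fun x hx => (hc.pos x hx).ne'

theorem continuousOn_inv (hc : IsRegularSpeed c) : ContinuousOn (fun x => (c x)⁻¹) (Icc 0 1) :=
  hc.contDiffOn.continuousOn.inv₀ fun x hx => (hc.pos x hx).ne'

theorem exists_abs_derivWithin_div_le (hc : IsRegularSpeed c) :
    ∃ L > 0, ∀ x ∈ Icc (0:ℝ) 1, |derivWithin c (Icc 0 1) x / c x| ≤ L := by
  obtain ⟨L, hL⟩ := isCompact_Icc.exists_bound_of_continuousOn hc.continuousOn_derivWithin_div
  exact ⟨|L| + 1, by positivity, fun x hx => (hL x hx).trans (by linarith [le_abs_self L])⟩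

theorem travelTime_pos (hc : IsRegularSpeed c) : 0 < travelTime c :=
  intervalIntegral.intervalIntegral_pos_of_pos_on
    (hc.continuousOn_inv.intervalIntegrable_of_Icc zero_le_one)
    (fun x hx => inv_pos.2 (hc.pos x (Ioo_subset_Icc_self hx))) zero_lt_one

end IsRegularSpeed

namespace IsIVPSolution

variable {c V : ℝ → ℝ} {ξ : ℝ}

theorem continuous (hV : IsIVPSolution c ξ V) : Continuous V :=
  hV.contDiff.continuous

theorem continuous_deriv (hV : IsIVPSolution c ξ V) : Continuous (deriv V) :=
  hV.contDiff.continuous_deriv (by norm_num)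

theorem hasDerivAt (hV : IsIVPSolution c ξ V) (x : ℝ) : HasDerivAt V (deriv V x) x :=
  (hV.contDiff.differentiable (by norm_num) x).hasDerivAt

theorem continuousOn_pruferW (hV : IsIVPSolution c ξ V) (hc : IsRegularSpeed c) :
    ContinuousOn (pruferW c V ξ) (Icc 0 1) :=
  (hc.contDiffOn.continuousOn.mul hV.continuous_deriv.continuousOn).div_const ξ

theorem hasDerivWithinAt_pruferW (hV : IsIVPSolution c ξ V) (hc : IsRegularSpeed c)
    (hξ : ξ ≠ 0) {x : ℝ} (hx : x ∈ Ico (0:ℝ) 1) :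
    HasDerivWithinAt (pruferW c V ξ)
      (derivWithin c (Icc 0 1) x / c x * pruferW c V ξ x - ξ / c x * V x) (Ici x) x := by
  have hcx := (hc.pos x (Ico_subset_Icc_self hx)).ne'
  have hode := hV.ode x (Ico_subset_Icc_self hx)
  have hV' := (hV.contDiff.differentiable_deriv_two x).hasDerivAt.hasDerivWithinAt (s := Ici x)
  refine (((hc.hasDerivWithinAt hx).mul hV').div_const ξ).congr_deriv ?_
  rw [pruferW]
  field_simp
  linear_combination -hode

theorem pruferRadius_pos (hV : IsIVPSolution c ξ V) (hc : IsRegularSpeed c) (hξ : ξ ≠ 0) :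
    ∀ x ∈ Icc (0:ℝ) 1, 0 < V x ^ 2 + pruferW c V ξ x ^ 2 := by
  obtain ⟨L, hL0, hL⟩ := hc.exists_abs_derivWithin_div_le
  -- `(V² + W²)' = 2 (c'/c) W²` with `W = pruferW c V ξ`
  refine pos_of_deriv_right_ge_neg_mul (K := 2 * L)
    ((hV.continuous.continuousOn.pow 2).add ((hV.continuousOn_pruferW hc).pow 2))
    (fun x hx => ((hV.hasDerivAt x).hasDerivWithinAt.pow 2).add
      ((hV.hasDerivWithinAt_pruferW hc hξ hx).pow 2)) (fun x hx => ?_) ?_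
  · have hx' := Ico_subset_Icc_self hx
    have hLx := neg_le_of_abs_le (hL x hx')
    rw [deriv_eq_div_mul_pruferW (hc.pos x hx').ne' hξ]
    nlinarith [mul_nonneg hL0.le (sq_nonneg (V x)),
      mul_nonneg (neg_le_iff_add_nonneg.1 hLx) (sq_nonneg (pruferW c V ξ x))]
  · have := hc.pos 0 (left_mem_Icc.2 zero_le_one)
    rw [pruferW, hV.apply_zero, hV.deriv_zero]
    positivity

theorem continuousOn_pruferRate (hV : IsIVPSolution c ξ V) (hc : IsRegularSpeed c)
    (hξ : ξ ≠ 0) : ContinuousOn (pruferRate c V ξ) (Icc 0 1) :=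
  (continuousOn_const.div hc.contDiffOn.continuousOn fun x hx => (hc.pos x hx).ne').sub
    (hc.continuousOn_derivWithin_div.mul
      ((hV.continuous.continuousOn.mul (hV.continuousOn_pruferW hc)).div
        ((hV.continuous.continuousOn.pow 2).add ((hV.continuousOn_pruferW hc).pow 2))
        fun x hx => (hV.pruferRadius_pos hc hξ x hx).ne'))

theorem mul_cos_pruferAngle (hV : IsIVPSolution c ξ V) (hc : IsRegularSpeed c) (hξ : ξ ≠ 0) :
    ∀ x ∈ Icc (0:ℝ) 1,
      V x * cos (pruferAngle c V ξ x) = pruferW c V ξ x * sin (pruferAngle c V ξ x) := by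
  have hθ := fun x (hx : x ∈ Icc (0:ℝ) 1) =>
    hasDerivAt_pruferAngle (hV.continuousOn_pruferRate hc hξ) hx
  refine mul_cos_eq_mul_sin_of_hasDerivWithinAt
    (W' := fun x => derivWithin c (Icc 0 1) x / c x * pruferW c V ξ x - ξ / c x * V x)
    hV.continuous.continuousOn (hV.continuousOn_pruferW hc) hV.continuous_deriv.continuousOn
    ((hc.continuousOn_derivWithin_div.mul (hV.continuousOn_pruferW hc)).sub
      ((continuousOn_const.div hc.contDiffOn.continuousOn fun x hx => (hc.pos x hx).ne').mul
        hV.continuous.continuousOn))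
    (fun x hx => (hθ x hx).continuousAt.continuousWithinAt)
    (fun x _ => (hV.hasDerivAt x).hasDerivWithinAt) (fun x => hV.hasDerivWithinAt_pruferW hc hξ)
    (fun x hx => (hθ x (Ico_subset_Icc_self hx)).hasDerivWithinAt) (fun x hx => ?_)
    (fun x hx => (hV.pruferRadius_pos hc hξ x hx).ne') ?_
  · have hx' := Ico_subset_Icc_self hx
    have := (hV.pruferRadius_pos hc hξ x hx').ne'
    rw [pruferRate, deriv_eq_div_mul_pruferW (hc.pos x hx').ne' hξ]
    field_simp
    ring
  · simp [pruferAngle, hV.apply_zero]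

theorem pruferRate_eq (hV : IsIVPSolution c ξ V) (hc : IsRegularSpeed c) (hξ : ξ ≠ 0) {x : ℝ}
    (hx : x ∈ Icc (0:ℝ) 1) :
    pruferRate c V ξ x = ξ / c x - derivWithin c (Icc 0 1) x / c x *
      (sin (pruferAngle c V ξ x) * cos (pruferAngle c V ξ x)) := by
  have hρ := hV.pruferRadius_pos hc hξ x hx
  have hrel := hV.mul_cos_pruferAngle hc hξ x hx
  rw [pruferRate]
  congr 2
  rw [div_eq_iff hρ.ne']
  linear_combination (pruferW c V ξ x * cos (pruferAngle c V ξ x) -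
    V x * sin (pruferAngle c V ξ x)) * hrel -
      V x * pruferW c V ξ x * sin_sq_add_cos_sq (pruferAngle c V ξ x)

theorem eq_zero_iff_sin_pruferAngle_eq_zero (hV : IsIVPSolution c ξ V) (hc : IsRegularSpeed c)
    (hξ : ξ ≠ 0) : V 1 = 0 ↔ sin (pruferAngle c V ξ 1) = 0 := by
  have h1 := right_mem_Icc.2 (zero_le_one' ℝ)
  have hρ := hV.pruferRadius_pos hc hξ 1 h1
  have hrel := hV.mul_cos_pruferAngle hc hξ 1 h1
  constructor
  · intro hV1
    rw [hV1, zero_mul, eq_comm, mul_eq_zero] at hrel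
    exact hrel.resolve_left fun hW => by simp [hV1, hW] at hρ
  · intro hs
    rw [hs, mul_zero, mul_eq_zero] at hrel
    exact hrel.resolve_right fun hcos => by
      simpa [hs, hcos] using sin_sq_add_cos_sq (pruferAngle c V ξ 1)

theorem abs_pruferAngle_one_sub_mul_travelTime_le (hV : IsIVPSolution c ξ V)
    (hc : IsRegularSpeed c) (hξ : ξ ≠ 0) {L : ℝ}
    (hL : ∀ x ∈ Icc (0:ℝ) 1, |derivWithin c (Icc 0 1) x / c x| ≤ L) :
    |pruferAngle c V ξ 1 - ξ * travelTime c| ≤ L / 2 := by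
  have e : pruferAngle c V ξ 1 - ξ * travelTime c =
      ∫ x in (0:ℝ)..1, (pruferRate c V ξ x - ξ * (c x)⁻¹) := by
    rw [intervalIntegral.integral_sub (g := fun x => ξ * (c x)⁻¹)
      ((hV.continuousOn_pruferRate hc hξ).intervalIntegrable_of_Icc zero_le_one)
      ((continuousOn_const.mul hc.continuousOn_inv).intervalIntegrable_of_Icc zero_le_one),
      intervalIntegral.integral_const_mul, travelTime, pruferAngle]
    congr 1
    refine intervalIntegral.integral_congr fun x hx => ?_
    rw [uIcc_of_le zero_le_one] at hx
    exact IccExtend_of_mem _ _ hx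
  rw [e, ← Real.norm_eq_abs]
  refine (intervalIntegral.norm_integral_le_of_norm_le_const (C := L / 2) fun x hx => ?_).trans_eq
    (by norm_num)
  rw [uIoc_of_le zero_le_one] at hx
  have hx := Ioc_subset_Icc_self hx
  rw [Real.norm_eq_abs, pruferRate, ← div_eq_mul_inv, sub_sub_cancel_left, abs_neg, abs_mul]
  linarith [mul_le_mul (hL x hx) (abs_mul_div_sq_add_sq_le_half (V x) (pruferW c V ξ x))
    (abs_nonneg _) ((abs_nonneg _).trans (hL x hx))]

end IsIVPSolution

section Monotonicity

variable {c V₁ V₂ : ℝ → ℝ} {ξ₁ ξ₂ : ℝ}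

theorem abs_pruferRate_sub_sub_le (hV₁ : IsIVPSolution c ξ₁ V₁) (hV₂ : IsIVPSolution c ξ₂ V₂)
    (hc : IsRegularSpeed c) (hξ₁ : ξ₁ ≠ 0) (hξ₂ : ξ₂ ≠ 0) {L : ℝ}
    (hL : ∀ x ∈ Icc (0:ℝ) 1, |derivWithin c (Icc 0 1) x / c x| ≤ L) {x : ℝ}
    (hx : x ∈ Icc (0:ℝ) 1) :
    |pruferRate c V₂ ξ₂ x - pruferRate c V₁ ξ₁ x - (ξ₂ - ξ₁) / c x| ≤
      L * |pruferAngle c V₂ ξ₂ x - pruferAngle c V₁ ξ₁ x| := by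
  rw [hV₁.pruferRate_eq hc hξ₁ hx, hV₂.pruferRate_eq hc hξ₂ hx, sub_div,
    show ∀ a b d e f : ℝ, a - d * e - (b - d * f) - (a - b) = -(d * (e - f)) by intros; ring,
    abs_neg, abs_mul]
  exact mul_le_mul (hL x hx) (abs_sin_mul_cos_sub_le _ _) (abs_nonneg _)
    ((abs_nonneg _).trans (hL x hx))

theorem pruferAngle_one_lt_of_lt (hV₁ : IsIVPSolution c ξ₁ V₁) (hV₂ : IsIVPSolution c ξ₂ V₂)
    (hc : IsRegularSpeed c) (hξ₁ : ξ₁ ≠ 0) (hξ₂ : ξ₂ ≠ 0) (hξ : ξ₁ < ξ₂) :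
    pruferAngle c V₁ ξ₁ 1 < pruferAngle c V₂ ξ₂ 1 := by
  obtain ⟨L, hL0, hL⟩ := hc.exists_abs_derivWithin_div_le
  obtain ⟨C, hC⟩ := isCompact_Icc.exists_bound_of_continuousOn hc.contDiffOn.continuousOn
  have hcC : ∀ x ∈ Icc (0:ℝ) 1, c x ≤ C := fun x hx => (le_abs_self _).trans (hC x hx)
  have h0 := left_mem_Icc.2 (zero_le_one' ℝ)
  have hθ₁ := fun x (hx : x ∈ Icc (0:ℝ) 1) =>
    hasDerivAt_pruferAngle (hV₁.continuousOn_pruferRate hc hξ₁) hx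
  have hθ₂ := fun x (hx : x ∈ Icc (0:ℝ) 1) =>
    hasDerivAt_pruferAngle (hV₂.continuousOn_pruferRate hc hξ₂) hx
  have hpos := pos_of_deriv_right_ge_sub_mul_abs
    (u := fun x => pruferAngle c V₂ ξ₂ x - pruferAngle c V₁ ξ₁ x) zero_lt_one
    (div_pos (sub_pos.2 hξ) ((hc.pos 0 h0).trans_le (hcC 0 h0))) hL0.le
    (fun x hx => ((hθ₂ x hx).sub (hθ₁ x hx)).continuousAt.continuousWithinAt)
    (fun x hx => ((hθ₂ x (Ico_subset_Icc_self hx)).sub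
      (hθ₁ x (Ico_subset_Icc_self hx))).hasDerivWithinAt) (fun x hx => ?_)
    (by simp [pruferAngle])
  · exact sub_pos.1 hpos
  · have hx := Ico_subset_Icc_self hx
    have h := abs_le.1 (abs_pruferRate_sub_sub_le hV₁ hV₂ hc hξ₁ hξ₂ hL hx)
    have := div_le_div_of_nonneg_left (sub_pos.2 hξ).le (hc.pos x hx) (hcC x hx)
    linarith [h.1]

theorem abs_pruferAngle_one_sub_le (hV₁ : IsIVPSolution c ξ₁ V₁) (hV₂ : IsIVPSolution c ξ₂ V₂)
    (hc : IsRegularSpeed c) (hξ₁ : ξ₁ ≠ 0) (hξ₂ : ξ₂ ≠ 0) {L M : ℝ} (hL0 : 0 < L)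
    (hL : ∀ x ∈ Icc (0:ℝ) 1, |derivWithin c (Icc 0 1) x / c x| ≤ L)
    (hM : ∀ x ∈ Icc (0:ℝ) 1, (c x)⁻¹ ≤ M) :
    |pruferAngle c V₂ ξ₂ 1 - pruferAngle c V₁ ξ₁ 1| ≤ M * (exp L - 1) / L * |ξ₂ - ξ₁| := by
  have hθ₁ := fun x (hx : x ∈ Icc (0:ℝ) 1) =>
    hasDerivAt_pruferAngle (hV₁.continuousOn_pruferRate hc hξ₁) hx
  have hθ₂ := fun x (hx : x ∈ Icc (0:ℝ) 1) =>
    hasDerivAt_pruferAngle (hV₂.continuousOn_pruferRate hc hξ₂) hx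
  have h := norm_le_gronwallBound_of_norm_deriv_right_le (δ := 0) (K := L)
    (ε := |ξ₂ - ξ₁| * M) (f := fun x => pruferAngle c V₂ ξ₂ x - pruferAngle c V₁ ξ₁ x)
    (fun x hx => ((hθ₂ x hx).sub (hθ₁ x hx)).continuousAt.continuousWithinAt)
    (fun x hx => ((hθ₂ x (Ico_subset_Icc_self hx)).sub
      (hθ₁ x (Ico_subset_Icc_self hx))).hasDerivWithinAt) (by simp [pruferAngle])
    (fun x hx => ?_) 1 (right_mem_Icc.2 zero_le_one)
  · rw [gronwallBound_of_K_ne_0 hL0.ne'] at h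
    simp only [Real.norm_eq_abs, zero_mul, zero_add, sub_zero, mul_one] at h
    exact h.trans_eq (by ring)
  · have hx := Ico_subset_Icc_self hx
    have h := abs_pruferRate_sub_sub_le hV₁ hV₂ hc hξ₁ hξ₂ hL hx
    have hb : |(ξ₂ - ξ₁) / c x| ≤ |ξ₂ - ξ₁| * M := by
      rw [abs_div, abs_of_pos (hc.pos x hx), div_eq_mul_inv]
      exact mul_le_mul_of_nonneg_left (hM x hx) (abs_nonneg _)
    rw [Real.norm_eq_abs, Real.norm_eq_abs]
    linarith [abs_sub_abs_le_abs_sub (pruferRate c V₂ ξ₂ x - pruferRate c V₁ ξ₁ x)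
      ((ξ₂ - ξ₁) / c x)]

end Monotonicity

theorem continuousOn_pruferAngle_one {c : ℝ → ℝ} {v : ℝ → ℝ → ℝ}
    (hv : ∀ ξ > 0, IsIVPSolution c ξ (v ξ)) (hc : IsRegularSpeed c) :
    ContinuousOn (fun ξ => pruferAngle c (v ξ) ξ 1) (Ioi 0) := by
  obtain ⟨L, hL0, hL⟩ := hc.exists_abs_derivWithin_div_le
  obtain ⟨M, hM⟩ := isCompact_Icc.exists_bound_of_continuousOn hc.continuousOn_inv
  refine (LipschitzOnWith.of_dist_le_mul (K := (M * (exp L - 1) / L).toNNReal)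
    fun ξ hξ η hη => ?_).continuousOn
  rw [Real.dist_eq, Real.dist_eq, Real.coe_toNNReal']
  exact (abs_pruferAngle_one_sub_le (hv η hη) (hv ξ hξ) hc (ne_of_gt hη) (ne_of_gt hξ) hL0 hL
    fun x hx => (le_abs_self _).trans (hM x hx)).trans
    (mul_le_mul_of_nonneg_right (le_max_left _ _) (abs_nonneg _))

theorem isPhaseOfSlope_pruferAngle {c : ℝ → ℝ} {v : ℝ → ℝ → ℝ}
    (hv : ∀ ξ > 0, IsIVPSolution c ξ (v ξ)) (hc : IsRegularSpeed c) :
    IsPhaseOfSlope (fun ξ => pruferAngle c (v ξ) ξ 1) (travelTime c) where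
  strictMonoOn ξ hξ η hη h :=
    pruferAngle_one_lt_of_lt (hv ξ hξ) (hv η hη) hc (ne_of_gt hξ) (ne_of_gt hη) h
  continuousOn := continuousOn_pruferAngle_one hv hc
  exists_abs_sub_le := by
    obtain ⟨L, -, hL⟩ := hc.exists_abs_derivWithin_div_le
    exact ⟨L / 2, fun ξ hξ =>
      (hv ξ hξ).abs_pruferAngle_one_sub_mul_travelTime_le hc (ne_of_gt hξ) hL⟩

theorem IsWaveSpeed.isRegularSpeed {c0 : ℝ} {c : ℝ → ℝ} (hc : IsWaveSpeed c0 c) :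
    IsRegularSpeed c :=
  ⟨(hc.1.of_le (by norm_num)).mono Icc_subset_Ici_self, fun x hx => hc.2.1 x hx.1⟩

theorem IsRealFreqSolution.isIVPSolution {c : ℝ → ℝ} {v : ℝ → ℝ → ℝ}
    (hv : IsRealFreqSolution c v) (ξ : ℝ) : IsIVPSolution c ξ (v ξ) :=
  let ⟨hdiff, hode, h0, h0'⟩ := hv ξ
  ⟨hdiff, fun x hx => hode x hx.1, h0, h0'⟩

theorem statement6_general
    (c0 : ℝ)
    (c₁ c₂ : ℝ → ℝ) (hc₁ : IsWaveSpeed c0 c₁) (hc₂ : IsWaveSpeed c0 c₂)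
    (v₁ v₂ : ℝ → ℝ → ℝ)
    (hv₁ : IsRealFreqSolution c₁ v₁) (hv₂ : IsRealFreqSolution c₂ v₂)
    (hzeros : ∀ ξ > (0:ℝ), (v₁ ξ 1 = 0 ↔ v₂ ξ 1 = 0)) :
    ∫ x in (0:ℝ)..1, (c₁ x)⁻¹ = ∫ x in (0:ℝ)..1, (c₂ x)⁻¹ := by
  have h₁ := isPhaseOfSlope_pruferAngle (fun ξ _ => hv₁.isIVPSolution ξ) hc₁.isRegularSpeed
  have h₂ := isPhaseOfSlope_pruferAngle (fun ξ _ => hv₂.isIVPSolution ξ) hc₂.isRegularSpeed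
  refine h₁.slope_eq h₂ hc₁.isRegularSpeed.travelTime_pos fun ξ hξ => ?_
  rw [← (hv₁.isIVPSolution ξ).eq_zero_iff_sin_pruferAngle_eq_zero hc₁.isRegularSpeed hξ.ne',
    ← (hv₂.isIVPSolution ξ).eq_zero_iff_sin_pruferAngle_eq_zero hc₂.isRegularSpeed hξ.ne']
  exact hzeros ξ hξ

/-- if the Dirichlet spectra (zeros of `ξ ↦ v_c(ξ,1)` for `ξ > 0`) of the
two media coincide, then the total travel times coincide. -/
theorem statement6
    (c0 : ℝ) (hc0 : 0 < c0)
    (c₁ c₂ : ℝ → ℝ) (hc₁ : IsWaveSpeed c0 c₁) (hc₂ : IsWaveSpeed c0 c₂)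
    (v₁ v₂ : ℝ → ℝ → ℝ)
    (hv₁ : IsRealFreqSolution c₁ v₁) (hv₂ : IsRealFreqSolution c₂ v₂)
    (hzeros : ∀ ξ > (0:ℝ), (v₁ ξ 1 = 0 ↔ v₂ ξ 1 = 0)) :
    ∫ x in (0:ℝ)..1, (c₁ x)⁻¹ = ∫ x in (0:ℝ)..1, (c₂ x)⁻¹ :=
  statement6_general c0 c₁ c₂ hc₁ hc₂ v₁ v₂ hv₁ hv₂ hzeros
end

section
/- Let L > 0 and let c̃_1, c̃_2 ∈ C²([0,L]) be positive functions satisfying c̃_1(y)^{1/2}·(d²/dy²)(c̃_1(y)^{−1/2}) = c̃_2(y)^{1/2}·(d²/dy²)(c̃_2(y)^{−1/2}) for all y ∈ [0,L], together with c̃_1(0) = c̃_2(0) and c̃_1(L) = c̃_2(L). Then c̃_1(y) = c̃_2(y) for all y ∈ [0,L]. -/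
open Set

/-! With `u = c̃₁^{-1/2}` and `v = c̃₂^{-1/2}` the hypothesis says `u''/u = v''/v`, so the
Wronskian `u v' - u' v` has zero derivative and is constant. The quotient `v / u` equals `1` at
both endpoints, so by Rolle its derivative `(u v' - u' v) / u²` vanishes somewhere; hence the
Wronskian vanishes identically, `v / u` is constant, and `u = v`. -/

noncomputable def wronskianWithin (s : Set ℝ) (u v : ℝ → ℝ) (z : ℝ) : ℝ :=
  u z * derivWithin v s z - derivWithin u s z * v z

section Wronskian

variable {s : Set ℝ} {u v : ℝ → ℝ} {y : ℝ}

theorem derivWithin_wronskianWithin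
    (hu : DifferentiableWithinAt ℝ u s y) (hv : DifferentiableWithinAt ℝ v s y)
    (hu' : DifferentiableWithinAt ℝ (derivWithin u s) s y)
    (hv' : DifferentiableWithinAt ℝ (derivWithin v s) s y) :
    derivWithin (wronskianWithin s u v) s y
      = u y * derivWithin (derivWithin v s) s y - derivWithin (derivWithin u s) s y * v y := by
  unfold wronskianWithin
  rw [derivWithin_fun_sub (hu.fun_mul hv') (hu'.fun_mul hv), derivWithin_fun_mul hu hv',
    derivWithin_fun_mul hu' hv]
  ring

theorem derivWithin_div_eq_wronskianWithin
    (hu : DifferentiableWithinAt ℝ u s y) (hv : DifferentiableWithinAt ℝ v s y) (hu0 : u y ≠ 0) :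
    derivWithin (fun z => v z / u z) s y = wronskianWithin s u v y / u y ^ 2 := by
  rw [derivWithin_fun_div hv hu hu0, wronskianWithin]
  ring

end Wronskian

section SameEquation

variable {a b : ℝ} {u v : ℝ → ℝ}

theorem differentiableOn_derivWithin_Icc_of_contDiffOn_two (hab : a < b)
    (hu : ContDiffOn ℝ 2 u (Icc a b)) :
    DifferentiableOn ℝ (derivWithin u (Icc a b)) (Icc a b) :=
  (hu.derivWithin (uniqueDiffOn_Icc hab) (m := 1) (by norm_num)).differentiableOn one_ne_zero

theorem wronskianWithin_Icc_eq_left (hab : a < b)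
    (hu : ContDiffOn ℝ 2 u (Icc a b)) (hv : ContDiffOn ℝ 2 v (Icc a b))
    (hequ : ∀ y ∈ Icc a b, derivWithin (derivWithin u (Icc a b)) (Icc a b) y * v y
      = u y * derivWithin (derivWithin v (Icc a b)) (Icc a b) y) :
    ∀ y ∈ Icc a b, wronskianWithin (Icc a b) u v y = wronskianWithin (Icc a b) u v a := by
  have hud := hu.differentiableOn two_ne_zero
  have hvd := hv.differentiableOn two_ne_zero
  have hu'd := differentiableOn_derivWithin_Icc_of_contDiffOn_two hab hu
  have hv'd := differentiableOn_derivWithin_Icc_of_contDiffOn_two hab hv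
  refine constant_of_derivWithin_zero ((hud.mul hv'd).sub (hu'd.mul hvd)) fun y hy => ?_
  have hy : y ∈ Icc a b := Ico_subset_Icc_self hy
  rw [derivWithin_wronskianWithin (hud y hy) (hvd y hy) (hu'd y hy) (hv'd y hy), ← hequ y hy]
  ring

/-- `u'' v = u v''` says that `u` and `v` solve the same equation `w'' = q w` on `[a, b]`. -/
theorem eqOn_Icc_of_deriv2_mul_eq_mul_deriv2 (hab : a < b)
    (hu : ContDiffOn ℝ 2 u (Icc a b)) (hv : ContDiffOn ℝ 2 v (Icc a b))
    (hu0 : ∀ y ∈ Icc a b, u y ≠ 0)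
    (hequ : ∀ y ∈ Icc a b, derivWithin (derivWithin u (Icc a b)) (Icc a b) y * v y
      = u y * derivWithin (derivWithin v (Icc a b)) (Icc a b) y)
    (ha : u a = v a) (hb : u b = v b) :
    EqOn u v (Icc a b) := by
  set s := Icc a b
  have hW_const := wronskianWithin_Icc_eq_left hab hu hv hequ
  have hud : DifferentiableOn ℝ u s := hu.differentiableOn two_ne_zero
  have hvd : DifferentiableOn ℝ v s := hv.differentiableOn two_ne_zero
  set r : ℝ → ℝ := fun z => v z / u z
  have hrd : DifferentiableOn ℝ r s := hvd.div hud hu0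
  have hr' : ∀ y ∈ s, derivWithin r s y = wronskianWithin s u v y / u y ^ 2 := fun y hy =>
    derivWithin_div_eq_wronskianWithin (hud y hy) (hvd y hy) (hu0 y hy)
  have hr_one : ∀ x ∈ s, u x = v x → r x = 1 := fun x hx hx' => by
    simp only [r, ← hx', div_self (hu0 x hx)]
  have hsa : a ∈ s := left_mem_Icc.2 hab.le
  obtain ⟨ξ, hξ, hrξ⟩ := exists_deriv_eq_zero hab hrd.continuousOn
    ((hr_one a hsa ha).trans (hr_one b (right_mem_Icc.2 hab.le) hb).symm)
  have hξs : ξ ∈ s := Ioo_subset_Icc_self hξ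
  have hWξ : wronskianWithin s u v ξ = 0 := by
    rw [← derivWithin_of_mem_nhds (Icc_mem_nhds hξ.1 hξ.2), hr' ξ hξs] at hrξ
    simpa [hu0 ξ hξs] using hrξ
  have hr_const : ∀ y ∈ s, r y = r a := by
    refine constant_of_derivWithin_zero hrd fun y hy => ?_
    have hy : y ∈ s := Ico_subset_Icc_self hy
    rw [hr' y hy, hW_const y hy, ← hW_const ξ hξs, hWξ, zero_div]
  intro y hy
  have hry : v y / u y = 1 := (hr_const y hy).trans (hr_one a hsa ha)
  exact ((div_eq_one_iff_eq (hu0 y hy)).1 hry).symm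

end SameEquation

/-- the Liouville potential `c̃^{1/2} (c̃^{-1/2})''` together with the two
boundary values determines a positive `C²` speed on `[0,L]`. -/
theorem statement8
    (L : ℝ) (hL : 0 < L)
    (c₁ c₂ : ℝ → ℝ)
    (hc₁C : ContDiffOn ℝ 2 c₁ (Icc 0 L)) (hc₂C : ContDiffOn ℝ 2 c₂ (Icc 0 L))
    (hc₁pos : ∀ y ∈ Icc (0:ℝ) L, 0 < c₁ y) (hc₂pos : ∀ y ∈ Icc (0:ℝ) L, 0 < c₂ y)
    (hq : ∀ y ∈ Icc (0:ℝ) L,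
      Real.sqrt (c₁ y) *
          derivWithin (derivWithin (fun z => (Real.sqrt (c₁ z))⁻¹) (Icc 0 L)) (Icc 0 L) y
        = Real.sqrt (c₂ y) *
          derivWithin (derivWithin (fun z => (Real.sqrt (c₂ z))⁻¹) (Icc 0 L)) (Icc 0 L) y)
    (h0 : c₁ 0 = c₂ 0) (hLval : c₁ L = c₂ L) :
    ∀ y ∈ Icc (0:ℝ) L, c₁ y = c₂ y := by
  have hsqrt_ne {c : ℝ → ℝ} (hc : ∀ y ∈ Icc (0:ℝ) L, 0 < c y) :
      ∀ y ∈ Icc (0:ℝ) L, Real.sqrt (c y) ≠ 0 := fun y hy => (Real.sqrt_pos.2 (hc y hy)).ne'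
  have hequ := eqOn_Icc_of_deriv2_mul_eq_mul_deriv2 hL
    (u := fun z => (Real.sqrt (c₁ z))⁻¹) (v := fun z => (Real.sqrt (c₂ z))⁻¹)
    ((hc₁C.sqrt fun y hy => (hc₁pos y hy).ne').fun_inv (hsqrt_ne hc₁pos))
    ((hc₂C.sqrt fun y hy => (hc₂pos y hy).ne').fun_inv (hsqrt_ne hc₂pos))
    (fun y hy => inv_ne_zero (hsqrt_ne hc₁pos y hy))
    (fun y hy => by
      have h := hq y hy
      field_simp [hsqrt_ne hc₁pos y hy, hsqrt_ne hc₂pos y hy] at h ⊢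
      linarith)
    (by simp only [h0]) (by simp only [hLval])
  intro y hy
  exact (Real.sqrt_inj (hc₁pos y hy).le (hc₂pos y hy).le).1 (inv_injective (hequ hy))
end

section
/- Let {λ_k}_{k≥1} and {μ_k}_{k≥1} be strictly increasing sequences of real numbers with λ_k = (kπ)² + O(1) and μ_k = (kπ)² + O(1) as k → ∞, and let {a_k} and {b_k} be bounded sequences of real numbers. If Σ_{k≥1} a_k/(z + λ_k) = Σ_{k≥1} b_k/(z + μ_k) for every real z > max(−λ_1, −μ_1), then for every k with a_k ≠ 0 there exists l with λ_k = μ_l. -/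
/-!
Off their pole sets, which are discrete and countable, both series converge locally uniformly and
so are holomorphic; the complement of the two pole sets is connected, so by the identity theorem
the two functions agree there. Near `-λ_k` the left side is `a_k / (z + λ_k)` plus a function
continuous at `-λ_k`, while, unless `λ_k` is some `μ_l`, the right side is continuous at `-λ_k`.
Multiplying by `z + λ_k` and letting `z → -λ_k` gives `a_k = 0`.
-/

open Filter Topology Set Function

lemma AnalyticOnNhd.eqOn_of_preconnected_of_eventuallyEq_ofReal {f g : ℂ → ℂ} {U : Set ℂ}
    (hf : AnalyticOnNhd ℂ f U) (hg : AnalyticOnNhd ℂ g U) (hU : IsPreconnected U) {x : ℝ}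
    (hx : (x : ℂ) ∈ U) (hfg : ∀ᶠ r : ℝ in 𝓝 x, f r = g r) : EqOn f g U := by
  have hmap : Tendsto ((↑) : ℝ → ℂ) (𝓝[≠] x) (𝓝[≠] (x : ℂ)) :=
    Complex.continuous_ofReal.continuousWithinAt.tendsto_nhdsWithin
      fun r hr h => hr (Complex.ofReal_injective h)
  exact hf.eqOn_of_preconnected_of_frequently_eq hg hU hx
    (hmap.frequently (hfg.filter_mono nhdsWithin_le_nhds).frequently)

namespace PartialFraction

variable {ι : Type*}

noncomputable def series (c ν : ι → ℂ) (z : ℂ) : ℂ := ∑' j, c j / (z + ν j)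

-- Only indices with `c j ≠ 0` contribute, so that `update c k 0` removes the pole `-ν k`.
def poles (c ν : ι → ℂ) : Set ℂ := {z | ∃ j, c j ≠ 0 ∧ z + ν j = 0}

variable {c ν : ι → ℂ}

lemma poles_countable [Countable ι] : (poles c ν).Countable :=
  (countable_range fun j => -ν j).mono fun _ ⟨j, _, hj⟩ =>
    mem_range.2 ⟨j, (eq_neg_of_add_eq_zero_left hj).symm⟩

lemma eventually_nhdsNE_notMem_poles (hν : Tendsto (fun j => ‖ν j‖) cofinite atTop) (w : ℂ) :
    ∀ᶠ z in 𝓝[≠] w, z ∉ poles c ν := by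
  have hnear : {j | ‖ν j‖ ≤ ‖w‖ + 1}.Finite := by
    simpa [not_lt] using hν.eventually (eventually_gt_atTop (‖w‖ + 1))
  set T := (fun j => -ν j) '' {j | ‖ν j‖ ≤ ‖w‖ + 1}
  have hT : ∀ᶠ z in 𝓝 w, z ∉ T \ {w} :=
    ((hnear.image _).sdiff).isClosed.compl_mem_nhds (by simp)
  have hball : ∀ᶠ z in 𝓝 w, ‖z‖ < ‖w‖ + 1 :=
    continuous_norm.continuousAt.eventually_lt continuousAt_const (lt_add_one _)
  rw [eventually_nhdsWithin_iff]
  filter_upwards [hT, hball] with z hzT hz hzw ⟨j, _, hj⟩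
  have hzj : z = -ν j := eq_neg_of_add_eq_zero_left hj
  refine hzT ⟨⟨j, ?_, hzj.symm⟩, hzw⟩
  simpa [hzj] using hz.le

lemma isOpen_compl_poles (hν : Tendsto (fun j => ‖ν j‖) cofinite atTop) :
    IsOpen (poles c ν)ᶜ := by
  refine isOpen_iff_eventually.2 fun w hw => ?_
  have := eventually_nhdsWithin_iff.1 (eventually_nhdsNE_notMem_poles (c := c) hν w)
  filter_upwards [this] with z hz
  by_cases hzw : z = w
  · exact hzw ▸ hw
  · exact hz hzw

lemma summable_norm_div_max (hν : Tendsto (fun j => ‖ν j‖) cofinite atTop)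
    (hc : Summable fun j => ‖c j‖ / ‖ν j‖) {δ : ℝ} (hδ : 0 < δ) (R : ℝ) :
    Summable fun j => ‖c j‖ / max δ (‖ν j‖ - R) := by
  refine Summable.of_norm_bounded_eventually (hc.mul_left 2) ?_
  filter_upwards [hν.eventually (eventually_ge_atTop (2 * R)),
    hν.eventually (eventually_gt_atTop 0)] with j hRj hj0
  rw [Real.norm_of_nonneg (by positivity)]
  calc ‖c j‖ / max δ (‖ν j‖ - R) ≤ ‖c j‖ / (‖ν j‖ / 2) :=
        div_le_div_of_nonneg_left (norm_nonneg _) (by positivity) (le_max_of_le_right (by linarith))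
    _ = 2 * (‖c j‖ / ‖ν j‖) := by field_simp

lemma exists_ball_norm_div_add_le (hν : Tendsto (fun j => ‖ν j‖) cofinite atTop)
    (hc : Summable fun j => ‖c j‖ / ‖ν j‖) {w : ℂ} (hw : w ∉ poles c ν) :
    ∃ ε > 0, ∃ u : ι → ℝ, Summable u ∧
      ∀ z ∈ Metric.ball w ε, ∀ j, ‖c j / (z + ν j)‖ ≤ u j := by
  obtain ⟨ε, hε, hball⟩ := Metric.isOpen_iff.1 (isOpen_compl_poles (c := c) hν) w hw
  refine ⟨ε / 2, half_pos hε, _, summable_norm_div_max hν hc (half_pos hε) (‖w‖ + ε),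
    fun z hz j => ?_⟩
  rw [norm_div]
  rcases eq_or_ne (c j) 0 with hcj | hcj
  · simp [hcj]
  have hpole : ε ≤ ‖w + ν j‖ := by
    by_contra! h
    refine hball (?_ : -ν j ∈ Metric.ball w ε) ⟨j, hcj, neg_add_cancel _⟩
    rwa [Metric.mem_ball, dist_eq_norm, ← norm_neg, neg_sub, sub_neg_eq_add]
  have hzw : ‖z - w‖ < ε / 2 := by rwa [← dist_eq_norm]
  have h₁ : ‖w + ν j‖ ≤ ‖z + ν j‖ + ‖z - w‖ := by
    simpa [add_comm] using norm_sub_le (z + ν j) (z - w)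
  have h₂ : ‖ν j‖ ≤ ‖z + ν j‖ + ‖z‖ := by simpa using norm_sub_le (z + ν j) z
  have h₃ : ‖z‖ ≤ ‖w‖ + ‖z - w‖ := by simpa using norm_add_le w (z - w)
  exact div_le_div_of_nonneg_left (norm_nonneg _) (by positivity)
    (max_le (by linarith) (by linarith))

lemma summable_div_add (hν : Tendsto (fun j => ‖ν j‖) cofinite atTop)
    (hc : Summable fun j => ‖c j‖ / ‖ν j‖) {z : ℂ} (hz : z ∉ poles c ν) :
    Summable fun j => c j / (z + ν j) :=
  let ⟨_, hε, _, hu, hbound⟩ := exists_ball_norm_div_add_le hν hc hz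
  .of_norm_bounded hu (hbound z (Metric.mem_ball_self hε))

lemma differentiableOn_series (hν : Tendsto (fun j => ‖ν j‖) cofinite atTop)
    (hc : Summable fun j => ‖c j‖ / ‖ν j‖) : DifferentiableOn ℂ (series c ν) (poles c ν)ᶜ := by
  have hterm (j : ι) : DifferentiableOn ℂ (fun z => c j / (z + ν j)) (poles c ν)ᶜ := by
    rcases eq_or_ne (c j) 0 with hcj | hcj
    · simp [hcj, differentiableOn_const]
    · exact (differentiableOn_const _).div (differentiableOn_id.add_const _)
        fun z hz h => hz ⟨j, hcj, h⟩
  refine differentiableOn_of_locally_differentiableOn fun w hw => ?_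
  obtain ⟨ε, hε, u, hu, hbound⟩ := exists_ball_norm_div_add_le hν hc hw
  have hopen : IsOpen (Metric.ball w ε ∩ (poles c ν)ᶜ) :=
    Metric.isOpen_ball.inter (isOpen_compl_poles hν)
  refine ⟨_, hopen, ⟨Metric.mem_ball_self hε, hw⟩, DifferentiableOn.mono ?_ inter_subset_right⟩
  exact Complex.differentiableOn_tsum_of_summable_norm hu
    (fun j => (hterm j).mono inter_subset_right) hopen fun j z hz => hbound z hz.1 j

lemma continuousAt_series (hν : Tendsto (fun j => ‖ν j‖) cofinite atTop)
    (hc : Summable fun j => ‖c j‖ / ‖ν j‖) {z : ℂ} (hz : z ∉ poles c ν) :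
    ContinuousAt (series c ν) z :=
  ((differentiableOn_series hν hc).differentiableAt
    ((isOpen_compl_poles hν).mem_nhds hz)).continuousAt

lemma series_eq_div_add_series_update [DecidableEq ι] (k : ι) {z : ℂ}
    (hz : Summable fun j => update c k 0 j / (z + ν j)) :
    series c ν z = c k / (z + ν k) + series (update c k 0) ν z := by
  have hupd : (fun j => update c k 0 j / (z + ν j)) = update (fun j => c j / (z + ν j)) k 0 := by
    ext j
    rcases eq_or_ne j k with rfl | hj <;> simp [*]
  rw [hupd] at hz
  rw [series, hz.tsum_eq_add_tsum_ite' k, series]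
  congr 1
  exact tsum_congr fun j => by rcases eq_or_ne j k with rfl | hj <;> simp [*]

lemma tendsto_mul_series_nhdsNE (hν : Tendsto (fun j => ‖ν j‖) cofinite atTop)
    (hc : Summable fun j => ‖c j‖ / ‖ν j‖) {k : ι} (hk : ∀ j ≠ k, c j ≠ 0 → ν j ≠ ν k) :
    Tendsto (fun z => (z + ν k) * series c ν z) (𝓝[≠] (-ν k)) (𝓝 (c k)) := by
  classical
  set c' := update c k 0
  have hc' : Summable fun j => ‖c' j‖ / ‖ν j‖ :=
    hc.of_nonneg_of_le (fun _ => by positivity) fun j => by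
      rcases eq_or_ne j k with rfl | hj
      · simp only [c', update_self, norm_zero, zero_div]; positivity
      · simp [c', hj]
  have hk' : -ν k ∉ poles c' ν := by
    rintro ⟨j, hcj, hj⟩
    rcases eq_or_ne j k with rfl | hjk
    · simp [c'] at hcj
    · rw [show c' j = c j from update_of_ne hjk _ _] at hcj
      exact hk j hjk hcj (by linear_combination hj)
  have hlim : Tendsto (fun z => c k + (z + ν k) * series c' ν z) (𝓝 (-ν k))
      (𝓝 (c k + (-ν k + ν k) * series c' ν (-ν k))) :=
    tendsto_const_nhds.add (((continuous_add_const _).tendsto _).mul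
      (continuousAt_series hν hc' hk'))
  rw [neg_add_cancel, zero_mul, add_zero] at hlim
  refine (hlim.mono_left nhdsWithin_le_nhds).congr' ?_
  filter_upwards [nhdsWithin_le_nhds ((isOpen_compl_poles hν).mem_nhds hk'),
    self_mem_nhdsWithin] with z hz hzk
  have hzk' : z + ν k ≠ 0 := fun h => hzk (eq_neg_of_add_eq_zero_left h)
  rw [series_eq_div_add_series_update k (summable_div_add hν hc' hz), mul_add,
    mul_div_cancel₀ _ hzk']

lemma coeff_eq_zero_of_eventuallyEq_of_continuousAt
    (hν : Tendsto (fun j => ‖ν j‖) cofinite atTop) (hc : Summable fun j => ‖c j‖ / ‖ν j‖)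
    {k : ι} (hk : ∀ j ≠ k, c j ≠ 0 → ν j ≠ ν k) {g : ℂ → ℂ} (hg : ContinuousAt g (-ν k))
    (hfg : series c ν =ᶠ[𝓝[≠] (-ν k)] g) : c k = 0 := by
  have hlim : Tendsto (fun z => (z + ν k) * g z) (𝓝 (-ν k)) (𝓝 ((-ν k + ν k) * g (-ν k))) :=
    ((continuous_add_const _).tendsto _).mul hg
  rw [neg_add_cancel, zero_mul] at hlim
  refine tendsto_nhds_unique ((tendsto_mul_series_nhdsNE hν hc hk).congr' ?_)
    (hlim.mono_left nhdsWithin_le_nhds)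
  filter_upwards [hfg] with z hz
  rw [hz]

lemma eqOn_compl_poles_union_of_eventuallyEq_ofReal [Countable ι] {d μ : ι → ℂ}
    (hν : Tendsto (fun j => ‖ν j‖) cofinite atTop) (hc : Summable fun j => ‖c j‖ / ‖ν j‖)
    (hμ : Tendsto (fun j => ‖μ j‖) cofinite atTop) (hd : Summable fun j => ‖d j‖ / ‖μ j‖)
    {x : ℝ} (hx : (x : ℂ) ∉ poles c ν ∪ poles d μ)
    (hfg : ∀ᶠ r : ℝ in 𝓝 x, series c ν r = series d μ r) :
    EqOn (series c ν) (series d μ) (poles c ν ∪ poles d μ)ᶜ := by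
  have hopen : IsOpen (poles c ν ∪ poles d μ)ᶜ :=
    compl_union _ _ ▸ (isOpen_compl_poles hν).inter (isOpen_compl_poles hμ)
  have hconn : IsPreconnected (poles c ν ∪ poles d μ)ᶜ :=
    (poles_countable.union poles_countable).isConnected_compl_of_one_lt_rank
      (by simp [Complex.rank_real_complex]) |>.isPreconnected
  refine AnalyticOnNhd.eqOn_of_preconnected_of_eventuallyEq_ofReal ?_ ?_ hconn hx hfg
  · exact ((differentiableOn_series hν hc).mono
      (compl_subset_compl.2 subset_union_left)).analyticOnNhd hopen
  · exact ((differentiableOn_series hμ hd).mono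
      (compl_subset_compl.2 subset_union_right)).analyticOnNhd hopen

lemma series_ofReal (c ν : ι → ℝ) (r : ℝ) :
    series (fun j => (c j : ℂ)) (fun j => (ν j : ℂ)) r = ((∑' j, c j / (r + ν j) : ℝ) : ℂ) := by
  rw [series, Complex.ofReal_tsum]
  push_cast
  rfl

lemma ofReal_notMem_poles {c ν : ι → ℝ} {r : ℝ} (hr : ∀ j, 0 < r + ν j) :
    (r : ℂ) ∉ poles (fun j => (c j : ℂ)) (fun j => (ν j : ℂ)) :=
  fun ⟨j, _, hj⟩ => (hr j).ne' (Complex.ofReal_injective (by push_cast; exact hj))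

end PartialFraction

section SquareGrowth

variable {ν c : ℕ → ℝ}

lemma eventually_succ_sq_le_of_abs_sub_le {C : ℝ}
    (h : ∀ k, |ν k - (((k : ℝ) + 1) * Real.pi) ^ 2| ≤ C) :
    ∀ᶠ k : ℕ in atTop, ((k : ℝ) + 1) ^ 2 ≤ ν k := by
  filter_upwards [tendsto_natCast_atTop_atTop.eventually_ge_atTop C] with k hk
  have hν := (abs_le.1 (h k)).1
  have hπ : 9 ≤ Real.pi ^ 2 := by nlinarith [Real.pi_gt_three]
  have : ((k : ℝ) + 1) ^ 2 * 9 ≤ (((k : ℝ) + 1) * Real.pi) ^ 2 := by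
    rw [mul_pow]; gcongr
  nlinarith [(k.cast_nonneg : (0 : ℝ) ≤ k)]

lemma tendsto_norm_ofReal_cofinite_of_eventually_succ_sq_le
    (h : ∀ᶠ k : ℕ in atTop, ((k : ℝ) + 1) ^ 2 ≤ ν k) :
    Tendsto (fun k => ‖(ν k : ℂ)‖) cofinite atTop := by
  rw [Nat.cofinite_eq_atTop]
  refine tendsto_atTop_mono' _ (h.mono fun k hk => ?_) tendsto_natCast_atTop_atTop
  dsimp only
  rw [Complex.norm_real, Real.norm_eq_abs]
  nlinarith [le_abs_self (ν k), (k.cast_nonneg : (0 : ℝ) ≤ k)]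

lemma summable_norm_ofReal_div_of_eventually_succ_sq_le {A : ℝ}
    (h : ∀ᶠ k : ℕ in atTop, ((k : ℝ) + 1) ^ 2 ≤ ν k) (hc : ∀ k, |c k| ≤ A) :
    Summable fun k => ‖(c k : ℂ)‖ / ‖(ν k : ℂ)‖ := by
  have hA : 0 ≤ A := (abs_nonneg _).trans (hc 0)
  have hsq : Summable fun k : ℕ => A / ((k : ℝ) + 1) ^ 2 := by
    have := (summable_nat_add_iff 1).2 (Real.summable_one_div_nat_pow.2 one_lt_two)
    simpa [div_eq_mul_inv] using this.mul_left A
  refine Summable.of_norm_bounded_eventually_nat hsq (h.mono fun k hk => ?_)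
  rw [Real.norm_of_nonneg (by positivity), Complex.norm_real, Complex.norm_real,
    Real.norm_eq_abs, Real.norm_eq_abs]
  exact div_le_div₀ hA (hc k) (by positivity) (hk.trans (le_abs_self _))

lemma tendsto_norm_ofReal_and_summable_of_abs_sub_le {C A : ℝ}
    (hν : ∀ k, |ν k - (((k : ℝ) + 1) * Real.pi) ^ 2| ≤ C) (hc : ∀ k, |c k| ≤ A) :
    Tendsto (fun k => ‖(ν k : ℂ)‖) cofinite atTop ∧
      Summable fun k => ‖(c k : ℂ)‖ / ‖(ν k : ℂ)‖ :=
  have h := eventually_succ_sq_le_of_abs_sub_le hν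
  ⟨tendsto_norm_ofReal_cofinite_of_eventually_succ_sq_le h,
    summable_norm_ofReal_div_of_eventually_succ_sq_le h hc⟩

end SquareGrowth

open PartialFraction in
/-- if two Dirichlet-type series of simple fractions with exponents
`λ_k = (kπ)² + O(1)`, `μ_k = (kπ)² + O(1)` and bounded coefficients agree on a real
half-line, then every exponent of the first with nonzero coefficient occurs among the
exponents of the second. -/
theorem statement12
    (lam mu a b : ℕ → ℝ)
    (hlam : StrictMono lam) (hmu : StrictMono mu)
    (hlam_asymp : ∃ C : ℝ, ∀ k, |lam k - (((k:ℝ) + 1) * Real.pi)^2| ≤ C)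
    (hmu_asymp : ∃ C : ℝ, ∀ k, |mu k - (((k:ℝ) + 1) * Real.pi)^2| ≤ C)
    (ha : ∃ A : ℝ, ∀ k, |a k| ≤ A) (hb : ∃ B : ℝ, ∀ k, |b k| ≤ B)
    (heq : ∀ z : ℝ, z > max (-(lam 0)) (-(mu 0)) →
      ∑' k, a k / (z + lam k) = ∑' k, b k / (z + mu k)) :
    ∀ k : ℕ, a k ≠ 0 → ∃ l : ℕ, lam k = mu l := by
  intro k hak
  by_contra! hk
  obtain ⟨C₁, hC₁⟩ := hlam_asymp
  obtain ⟨C₂, hC₂⟩ := hmu_asymp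
  obtain ⟨A, hA⟩ := ha
  obtain ⟨B, hB⟩ := hb
  obtain ⟨hν, hc⟩ := tendsto_norm_ofReal_and_summable_of_abs_sub_le hC₁ hA
  obtain ⟨hμ, hd⟩ := tendsto_norm_ofReal_and_summable_of_abs_sub_le hC₂ hB
  set M := max (-(lam 0)) (-(mu 0))
  have hM₁ (j : ℕ) : 0 < M + 1 + lam j := by
    linarith [le_max_left (-(lam 0)) (-(mu 0)), hlam.monotone j.zero_le]
  have hM₂ (j : ℕ) : 0 < M + 1 + mu j := by
    linarith [le_max_right (-(lam 0)) (-(mu 0)), hmu.monotone j.zero_le]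
  have hFG := eqOn_compl_poles_union_of_eventuallyEq_ofReal hν hc hμ hd
    (fun h => h.elim (ofReal_notMem_poles hM₁) (ofReal_notMem_poles hM₂))
    ((lt_mem_nhds (lt_add_one M)).mono fun r hr => by
      rw [series_ofReal, series_ofReal, heq r hr])
  have hev : series (fun j => (a j : ℂ)) (fun j => (lam j : ℂ)) =ᶠ[𝓝[≠] (-(lam k : ℂ))]
      series (fun l => (b l : ℂ)) (fun l => (mu l : ℂ)) := by
    filter_upwards [eventually_nhdsNE_notMem_poles hν _, eventually_nhdsNE_notMem_poles hμ _]
      with z h₁ h₂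
    exact hFG fun h => h.elim h₁ h₂
  have hpole : -(lam k : ℂ) ∉ poles (fun l => (b l : ℂ)) (fun l => (mu l : ℂ)) :=
    fun ⟨l, _, hl⟩ => hk l (Complex.ofReal_injective (neg_add_eq_zero.1 hl))
  exact hak (Complex.ofReal_eq_zero.1 (coeff_eq_zero_of_eventuallyEq_of_continuousAt hν hc
    (fun j hj _ h => hj (hlam.injective (Complex.ofReal_injective h)))
    (continuousAt_series hμ hd hpole) hev))
end
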